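/- arXiv:2110.14045 — 9 statements merged into one kernel-verified Lean document; each statement's English description precedes it below -/
import Mathlib

section
/- Let k ≥ 1 and let a : Fin (2k) → ℕ with a i > 0 for all i. Let π be a finite partition of Fin (2k) into nonempty blocks and suppose that, in the polynomial ring ℤ[X], ∑_{B ∈ π} (∏_{i ∈ B} (a i : ℤ)) · X^{B.card} = c · X^k for some integer c. Then every block of π has cardinality exactly k, and π has exactly two blocks. -/
open Finset

theorem stmt_0 (k : ℕ) (hk : 1 ≤ k) (a : Fin (2 * k) → ℕ) (ha : ∀ i, 0 < a i)
    (π : Finpartition (Finset.univ : Finset (Fin (2 * k)))) (c : ℤ)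
    (h : ∑ B ∈ π.parts, Polynomial.C (∏ i ∈ B, (a i : ℤ)) * Polynomial.X ^ B.card
      = Polynomial.C c * Polynomial.X ^ k) :
    (∀ B ∈ π.parts, B.card = k) ∧ π.parts.card = 2 := by
  have key : ∀ B ∈ π.parts, B.card = k := by
    intro B hB
    by_contra hne
    have hc := congrArg (fun p => Polynomial.coeff p B.card) h
    simp only [Polynomial.finset_sum_coeff, Polynomial.coeff_C_mul,
      Polynomial.coeff_X_pow] at hc
    have hnonneg : ∀ B' ∈ π.parts,
        (0:ℤ) ≤ (∏ i ∈ B', (a i : ℤ)) * (if B.card = B'.card then 1 else 0) := by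
      intro B' _
      apply mul_nonneg
      · exact Finset.prod_nonneg fun i _ => by positivity
      · split <;> norm_num
    have hle := Finset.single_le_sum hnonneg hB
    have hposB : (0:ℤ) < (∏ i ∈ B, (a i : ℤ)) * (if B.card = B.card then 1 else 0) := by
      rw [if_pos rfl, mul_one]
      exact Finset.prod_pos fun i _ => Int.natCast_pos.mpr (ha i)
    have hsum_pos : (0:ℤ) < ∑ B' ∈ π.parts,
        (∏ i ∈ B', (a i : ℤ)) * (if B.card = B'.card then 1 else 0) :=
      lt_of_lt_of_le hposB hle
    rw [hc] at hsum_pos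
    rw [if_neg (fun hh => hne hh)] at hsum_pos
    simp at hsum_pos
  refine ⟨key, ?_⟩
  have hsum : ∑ B ∈ π.parts, B.card = Finset.univ.card := π.sum_card_parts
  rw [Finset.sum_congr rfl key, Finset.sum_const, smul_eq_mul,
    Finset.card_univ, Fintype.card_fin] at hsum
  have hk0 : k ≠ 0 := by omega
  exact Nat.eq_of_mul_eq_mul_right (by omega) hsum
end

section
/- Let k ≥ 1, let a : Fin (2k) → ℕ with a i > 0 for all i, and let m : ℕ satisfy ∏_i a i = m². Then the following are equivalent: (1) there exists a finite partition π of Fin (2k) into nonempty blocks such that, in ℤ[X], ∑_{B ∈ π} (∏_{i ∈ B} (a i : ℤ)) · X^{B.card} = 2·m · X^k; (2) there exists S : Finset (Fin (2k)) with S.card = k and ∏_{i ∈ S} a i = m. -/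
open Finset

theorem stmt_1 (k : ℕ) (hk : 1 ≤ k) (a : Fin (2 * k) → ℕ) (ha : ∀ i, 0 < a i)
    (m : ℕ) (hm : ∏ i, a i = m ^ 2) :
    (∃ π : Finpartition (Finset.univ : Finset (Fin (2 * k))),
      ∑ B ∈ π.parts, Polynomial.C (∏ i ∈ B, (a i : ℤ)) * Polynomial.X ^ B.card
        = Polynomial.C (2 * (m : ℤ)) * Polynomial.X ^ k) ↔
    (∃ S : Finset (Fin (2 * k)), S.card = k ∧ ∏ i ∈ S, a i = m) := by
  have hm0 : 0 < m := by
    by_contra h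
    push_neg at h
    interval_cases m
    have : 0 < ∏ i, a i := Finset.prod_pos fun i _ => ha i
    simp [hm] at this
  constructor
  · rintro ⟨π, hπ⟩
    -- all parts have card k
    have hcoeff : ∀ d : ℕ,
        (∑ B ∈ π.parts with B.card = d, ∏ i ∈ B, (a i : ℤ))
          = if d = k then 2 * (m : ℤ) else 0 := by
      intro d
      have := congrArg (fun p => Polynomial.coeff p d) hπ
      simp only [Polynomial.finset_sum_coeff, Polynomial.coeff_C_mul,
        Polynomial.coeff_X_pow] at this
      have h2 : (∑ x ∈ π.parts, (∏ i ∈ x, (a i : ℤ)) * if d = x.card then 1 else 0)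
          = if d = k then 2 * (m : ℤ) else 0 := by
        rw [this]; split <;> simp
      rw [← h2, Finset.sum_filter]
      apply Finset.sum_congr rfl
      intro B _
      by_cases h : B.card = d
      · simp [h]
      · have h' : ¬ d = B.card := fun hh => h hh.symm
        simp only [if_neg h, if_neg h', mul_zero]
    have hcard : ∀ B ∈ π.parts, B.card = k := by
      intro B hB
      by_contra h
      have hpos : 0 < ∑ C ∈ π.parts with C.card = B.card, ∏ i ∈ C, (a i : ℤ) := by
        apply Finset.sum_pos
        · intro C hC
          exact Finset.prod_pos fun i _ => by exact_mod_cast ha i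
        · exact ⟨B, by simp [Finset.mem_filter, hB]⟩
      rw [hcoeff B.card, if_neg h] at hpos
      exact lt_irrefl 0 hpos
    -- exactly two parts
    have hsumcard : ∑ B ∈ π.parts, B.card = 2 * k := by
      rw [π.sum_card_parts, Finset.card_univ, Fintype.card_fin]
    have hnparts : π.parts.card = 2 := by
      have heq : ∑ B ∈ π.parts, B.card = ∑ _B ∈ π.parts, k := Finset.sum_congr rfl hcard
      rw [heq, Finset.sum_const, smul_eq_mul] at hsumcard
      exact Nat.eq_of_mul_eq_mul_right hk hsumcard
    obtain ⟨B1, B2, hne, hparts⟩ := Finset.card_eq_two.mp hnparts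
    -- sum of products = 2m
    have hsum : (∏ i ∈ B1, (a i : ℤ)) + ∏ i ∈ B2, (a i : ℤ) = 2 * m := by
      have := hcoeff k
      rw [if_pos rfl] at this
      rw [← this]
      have hf : π.parts.filter (fun B => B.card = k) = π.parts :=
        Finset.filter_true_of_mem hcard
      rw [hf, hparts, Finset.sum_pair hne]
    -- product of products = m^2
    have hprod : (∏ i ∈ B1, (a i : ℤ)) * ∏ i ∈ B2, (a i : ℤ) = (m : ℤ) ^ 2 := by
      have hdisj : Disjoint B1 B2 := by
        have := π.supIndep.pairwiseDisjoint
        exact this (by rw [hparts]; simp) (by rw [hparts]; simp) hne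
      have hunion : B1 ∪ B2 = (Finset.univ : Finset (Fin (2 * k))) := by
        have := π.sup_parts
        rw [hparts] at this
        simpa [Finset.sup_insert, Finset.sup_singleton, Finset.sup_eq_union] using this
      rw [← Finset.prod_union hdisj, hunion]
      exact_mod_cast congrArg (Nat.cast : ℕ → ℤ) hm
    have hB1 : (∏ i ∈ B1, (a i : ℤ)) = m := by
      have key : ((∏ i ∈ B1, (a i : ℤ)) - m) ^ 2 = 0 := by
        linear_combination (∏ i ∈ B1, (a i : ℤ)) * hsum - hprod
      have h0 := sq_eq_zero_iff.mp key
      linarith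
    refine ⟨B1, hcard B1 (by rw [hparts]; simp), ?_⟩
    exact_mod_cast hB1
  · rintro ⟨S, hScard, hSprod⟩
    have hScompl : Sᶜ.card = k := by
      rw [Finset.card_compl, Fintype.card_fin, hScard]
      omega
    have hSne : S.Nonempty := Finset.card_pos.mp (by omega)
    have hScne : Sᶜ.Nonempty := Finset.card_pos.mp (by omega)
    have hdisj : Disjoint S Sᶜ := disjoint_compl_right
    have hne : S ≠ Sᶜ := by
      intro h
      obtain ⟨x, hx⟩ := hSne
      exact (Finset.mem_compl.mp (h ▸ hx)) hx
    have hcprod : ∏ i ∈ Sᶜ, a i = m := by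
      have : (∏ i ∈ S, a i) * ∏ i ∈ Sᶜ, a i = m ^ 2 := by
        rw [Finset.prod_mul_prod_compl]; exact hm
      rw [hSprod, sq] at this
      exact Nat.eq_of_mul_eq_mul_left hm0 this
    refine ⟨⟨{S, Sᶜ}, ?_, ?_, ?_⟩, ?_⟩
    · rw [Finset.supIndep_pair hne]
      exact hdisj
    · simp [Finset.sup_insert, Finset.sup_singleton, Finset.sup_eq_union]
    · simp only [Finset.mem_insert, Finset.mem_singleton]
      push_neg
      constructor
      · exact fun h => hSne.ne_empty h.symm
      · exact fun h => hScne.ne_empty h.symm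
    · simp only
      rw [Finset.sum_pair hne, hScard, hScompl]
      have h1 : ∏ i ∈ S, (a i : ℤ) = m := by exact_mod_cast congrArg Nat.cast hSprod
      have h2 : ∏ i ∈ Sᶜ, (a i : ℤ) = m := by exact_mod_cast congrArg Nat.cast hcprod
      rw [h1, h2, ← add_mul, ← Polynomial.C_add]
      ring_nf
end

section
/- Let k ≥ 1 and let a : Fin (2k) → ℕ with a i > 0 for all i. In R = MvPolynomial (Fin 2) ℤ write x = X 0 and y = X 1, let ι = Fin (2k) ⊕ Fin 2, and define v : ι → R by v (inl i) = (a i) · x and v (inr j) = y for both j. Then the following are equivalent: (1) there exist a finite partition π of ι into nonempty blocks and a block B₀ ∈ π such that ∏_{j ∈ B₀} v j = ∑_{B ∈ π, B ≠ B₀} ∏_{j ∈ B} v j; (2) there exists S : Finset (Fin (2k)) with S.card = k and ∏_{i ∈ S} a i = ∏_{i ∉ S} a i. -/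
/-!
Every block product is a monomial `c_B x^p y^q` with `c_B > 0`, so the right-hand side is a
sum of monomials with positive coefficients and no cancellation can occur: every other block
has the same degree as the leading one. All blocks therefore share one degree, and the two
copies of `y` force exactly two blocks, each containing one `y` and half of the `x`-indices;
equal coefficients are then equal products of the `a i`. Conversely, `S` together with one copy of `y`, and its
complement, form such a partition.
-/

open Finset MvPolynomial

namespace Finset

variable {α β : Type*} [Fintype α] [Fintype β] [DecidableEq α] [DecidableEq β]

theorem toLeft_compl (u : Finset (α ⊕ β)) : uᶜ.toLeft = u.toLeftᶜ := by
  ext; simp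

theorem toRight_compl (u : Finset (α ⊕ β)) : uᶜ.toRight = u.toRightᶜ := by
  ext; simp

end Finset

namespace Finpartition

variable {α : Type*} [DecidableEq α]

theorem sum_sum_parts {M : Type*} [AddCommMonoid M] {s : Finset α} (P : Finpartition s)
    (f : α → M) : ∑ B ∈ P.parts, ∑ j ∈ B, f j = ∑ j ∈ s, f j := by
  conv_rhs => rw [← P.biUnion_parts, sum_biUnion P.supIndep.pairwiseDisjoint]
  rfl

variable [Fintype α]

def ofCompl {B : Finset α} (hB : B.Nonempty) (hBc : Bᶜ.Nonempty) :
    Finpartition (univ : Finset α) where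
  parts := {B, Bᶜ}
  supIndep := (supIndep_pair (disjoint_compl_right.ne hB.ne_empty)).2 disjoint_compl_right
  sup_parts := by simp
  bot_notMem := by simp [hB.ne_empty.symm, hBc.ne_empty.symm]

@[simp]
theorem ofCompl_parts {B : Finset α} (hB : B.Nonempty) (hBc : Bᶜ.Nonempty) :
    (ofCompl hB hBc).parts = {B, Bᶜ} :=
  rfl

theorem parts_erase_eq_compl_of_card_eq_two (P : Finpartition (univ : Finset α))
    (hP : #P.parts = 2) {B : Finset α} (hB : B ∈ P.parts) : P.parts.erase B = {Bᶜ} := by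
  obtain ⟨C, hC⟩ := card_eq_one.1 (by rw [card_erase_of_mem hB, hP] : #(P.parts.erase B) = 1)
  have hCmem : C ∈ P.parts := mem_of_mem_erase (hC ▸ mem_singleton_self C)
  have hCB : C ≠ B := ne_of_mem_erase (hC ▸ mem_singleton_self C)
  have hparts : P.parts = {B, C} := by rw [← insert_erase hB, hC]
  have hsup : B ⊔ C = ⊤ := by simpa [hparts] using P.sup_parts
  have hdisj : Disjoint B C := P.disjoint hB hCmem hCB.symm
  rw [hC, (IsCompl.of_eq hdisj.eq_bot hsup).compl_eq]

end Finpartition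

namespace MvPolynomial

variable {σ R ι : Type*} [CommSemiring R] [PartialOrder R] [IsOrderedCancelAddMonoid R]

theorem eq_of_monomial_eq_sum_monomial {s : Finset ι} {e : ι → σ →₀ ℕ} {c : ι → R}
    (hc : ∀ i ∈ s, 0 < c i) {e₀ : σ →₀ ℕ} {c₀ : R}
    (h : monomial e₀ c₀ = ∑ i ∈ s, monomial (e i) (c i)) : ∀ i ∈ s, e i = e₀ := by
  classical
  intro i hi
  by_contra hne
  have hcoeff := congrArg (coeff (e i)) h
  simp only [coeff_monomial, coeff_sum, if_neg (Ne.symm hne)] at hcoeff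
  refine (sum_pos' (fun j hj => ?_) ⟨i, hi, ?_⟩).ne hcoeff
  · split_ifs <;> simp [(hc j hj).le]
  · simpa using hc i hi

end MvPolynomial

namespace ProductPartition

variable {α : Type*}

-- The variable indexed by `j` is `monomial (varDegree j) (varCoeff a j)`: `a i * x` for
-- `j = inl i` and `y` for `j = inr _`.
noncomputable def varDegree : α ⊕ Fin 2 → Fin 2 →₀ ℕ :=
  Sum.elim (fun _ => Finsupp.single 0 1) (fun _ => Finsupp.single 1 1)

def varCoeff (a : α → ℕ) : α ⊕ Fin 2 → ℤ :=
  Sum.elim (fun i => a i) 1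

theorem sum_varDegree_apply_zero (B : Finset (α ⊕ Fin 2)) :
    (∑ j ∈ B, varDegree j) 0 = #B.toLeft := by
  rw [Finsupp.finsetSum_apply, ← B.toLeft_disjSum_toRight, sum_disjSum]
  simp [varDegree]

theorem sum_varDegree_apply_one (B : Finset (α ⊕ Fin 2)) :
    (∑ j ∈ B, varDegree j) 1 = #B.toRight := by
  rw [Finsupp.finsetSum_apply, ← B.toLeft_disjSum_toRight, sum_disjSum]
  simp [varDegree]

theorem sum_varDegree_eq_iff {B C : Finset (α ⊕ Fin 2)} :
    ∑ j ∈ B, varDegree j = ∑ j ∈ C, varDegree j ↔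
      #B.toLeft = #C.toLeft ∧ #B.toRight = #C.toRight := by
  rw [Finsupp.ext_iff, Fin.forall_fin_two]
  simp only [sum_varDegree_apply_zero, sum_varDegree_apply_one]

theorem prod_varCoeff (a : α → ℕ) (B : Finset (α ⊕ Fin 2)) :
    ∏ j ∈ B, varCoeff a j = ∏ i ∈ B.toLeft, (a i : ℤ) := by
  rw [← B.toLeft_disjSum_toRight, prod_disjSum]
  simp [varCoeff]

theorem varCoeff_pos {a : α → ℕ} (ha : ∀ i, 0 < a i) (j : α ⊕ Fin 2) : 0 < varCoeff a j := by
  cases j <;> simp [varCoeff, ha]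

variable [Fintype α] [DecidableEq α]

theorem exists_half_of_blockMonomial_eq_sum {a : α → ℕ} (ha : ∀ i, 0 < a i)
    (π : Finpartition (univ : Finset (α ⊕ Fin 2))) {B₀ : Finset (α ⊕ Fin 2)}
    (hB₀ : B₀ ∈ π.parts)
    (h : monomial (∑ j ∈ B₀, varDegree j) (∏ j ∈ B₀, varCoeff a j) =
      ∑ B ∈ π.parts.erase B₀, monomial (∑ j ∈ B, varDegree j) (∏ j ∈ B, varCoeff a j)) :
    ∃ S : Finset α, 2 * #S = Fintype.card α ∧ ∏ i ∈ S, a i = ∏ i ∈ Sᶜ, a i := by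
  have hpos (B : Finset (α ⊕ Fin 2)) : 0 < ∏ j ∈ B, varCoeff a j :=
    prod_pos fun j _ => varCoeff_pos ha j
  have hdeg := eq_of_monomial_eq_sum_monomial (fun B _ => hpos B) h
  have hdeg_parts : ∀ B ∈ π.parts, ∑ j ∈ B, varDegree j = ∑ j ∈ B₀, varDegree j := by
    intro B hB
    obtain rfl | hne := eq_or_ne B B₀
    · rfl
    · exact hdeg B (mem_erase.2 ⟨hne, hB⟩)
  -- the blocks together make up the degree `(card α, 2)` of the product of all variables
  have htotal : #π.parts • ∑ j ∈ B₀, varDegree j = ∑ j : α ⊕ Fin 2, varDegree j := by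
    rw [← π.sum_sum_parts, sum_congr rfl hdeg_parts, sum_const]
  have hx := congrArg (· 0) htotal
  have hy := congrArg (· 1) htotal
  simp only [Finsupp.smul_apply, smul_eq_mul, sum_varDegree_apply_zero,
    sum_varDegree_apply_one, toLeft_univ, toRight_univ, card_univ, Fintype.card_fin] at hx hy
  have hrest : (π.parts.erase B₀).Nonempty := by
    rw [nonempty_iff_ne_empty]
    intro hempty
    rw [hempty, sum_empty, monomial_eq_zero] at h
    exact (hpos B₀).ne' h
  have hcard : #π.parts = 2 := by
    have hge : 2 ≤ #π.parts := by
      have hrest_pos := hrest.card_pos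
      rw [card_erase_of_mem hB₀] at hrest_pos
      omega
    have hle := Nat.le_of_dvd two_pos ⟨_, hy.symm⟩
    omega
  have herase := π.parts_erase_eq_compl_of_card_eq_two hcard hB₀
  rw [herase, sum_singleton, hdeg B₀ᶜ (by simp [herase])] at h
  refine ⟨B₀.toLeft, by rw [← hx, hcard], ?_⟩
  have hcoeff := ((monomial_eq_monomial_iff _ _ _ _).1 h).resolve_right
    (fun hzero => (hpos B₀).ne' hzero.1) |>.2
  rw [prod_varCoeff, prod_varCoeff, toLeft_compl] at hcoeff
  exact_mod_cast hcoeff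

theorem exists_blockMonomial_eq_sum_of_half (a : α → ℕ) {S : Finset α}
    (hS : 2 * #S = Fintype.card α) (hprod : ∏ i ∈ S, a i = ∏ i ∈ Sᶜ, a i) :
    ∃ π : Finpartition (univ : Finset (α ⊕ Fin 2)), ∃ B₀ ∈ π.parts,
      monomial (∑ j ∈ B₀, varDegree j) (∏ j ∈ B₀, varCoeff a j) =
        ∑ B ∈ π.parts.erase B₀, monomial (∑ j ∈ B, varDegree j) (∏ j ∈ B, varCoeff a j) := by
  set B : Finset (α ⊕ Fin 2) := S.disjSum {0}
  have hB : B.Nonempty := ⟨.inr 0, by simp [B]⟩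
  have hBc : Bᶜ.Nonempty := ⟨.inr 1, by simp [B]⟩
  refine ⟨.ofCompl hB hBc, B, mem_insert_self _ _, ?_⟩
  have hBBc : B ∉ ({Bᶜ} : Finset _) := notMem_singleton.2 (disjoint_compl_right.ne hB.ne_empty)
  rw [Finpartition.ofCompl_parts, erase_insert hBBc, sum_singleton]
  have hdeg : ∑ j ∈ B, varDegree j = ∑ j ∈ Bᶜ, varDegree j := by
    rw [sum_varDegree_eq_iff, toLeft_compl, toRight_compl, card_compl, card_compl]
    simp only [B, toLeft_disjSum, toRight_disjSum, card_singleton, Fintype.card_fin]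
    exact ⟨by omega, trivial⟩
  have hcoeff : ∏ j ∈ B, varCoeff a j = ∏ j ∈ Bᶜ, varCoeff a j := by
    rw [prod_varCoeff, prod_varCoeff, toLeft_compl, toLeft_disjSum]
    exact_mod_cast hprod
  rw [hdeg, hcoeff]

theorem exists_blockMonomial_eq_sum_iff {a : α → ℕ} (ha : ∀ i, 0 < a i) :
    (∃ π : Finpartition (univ : Finset (α ⊕ Fin 2)), ∃ B₀ ∈ π.parts,
      monomial (∑ j ∈ B₀, varDegree j) (∏ j ∈ B₀, varCoeff a j) =
        ∑ B ∈ π.parts.erase B₀, monomial (∑ j ∈ B, varDegree j) (∏ j ∈ B, varCoeff a j)) ↔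
    ∃ S : Finset α, 2 * #S = Fintype.card α ∧ ∏ i ∈ S, a i = ∏ i ∈ Sᶜ, a i :=
  ⟨fun ⟨π, _, hB₀, h⟩ => exists_half_of_blockMonomial_eq_sum ha π hB₀ h,
    fun ⟨_, hS, hprod⟩ => exists_blockMonomial_eq_sum_of_half a hS hprod⟩

end ProductPartition

open ProductPartition

theorem stmt_4_general (k : ℕ) (a : Fin (2 * k) → ℕ) (ha : ∀ i, 0 < a i)
    (v : Fin (2 * k) ⊕ Fin 2 → MvPolynomial (Fin 2) ℤ)
    (hv1 : ∀ i, v (Sum.inl i) = (a i : MvPolynomial (Fin 2) ℤ) * MvPolynomial.X 0)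
    (hv2 : ∀ j, v (Sum.inr j) = MvPolynomial.X 1) :
    (∃ π : Finpartition (Finset.univ : Finset (Fin (2 * k) ⊕ Fin 2)),
      ∃ B₀ ∈ π.parts, ∏ j ∈ B₀, v j = ∑ B ∈ π.parts.erase B₀, ∏ j ∈ B, v j) ↔
    (∃ S : Finset (Fin (2 * k)), S.card = k ∧ ∏ i ∈ S, a i = ∏ i ∈ Sᶜ, a i) := by
  have hv : v = fun j => monomial (varDegree j) (varCoeff a j) := by
    funext j
    cases j with
    | inl i => rw [hv1, X, ← map_natCast C, C_mul_monomial, mul_one]; rfl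
    | inr j => simp [hv2, varDegree, varCoeff, X]
  have hprod (B : Finset (Fin (2 * k) ⊕ Fin 2)) :
      ∏ j ∈ B, v j = monomial (∑ j ∈ B, varDegree j) (∏ j ∈ B, varCoeff a j) := by
    rw [hv, monomial_sum_prod]
  simp only [hprod, exists_blockMonomial_eq_sum_iff ha, Fintype.card_fin,
    Nat.mul_left_cancel_iff two_pos]

theorem stmt_4 (k : ℕ) (hk : 1 ≤ k) (a : Fin (2 * k) → ℕ) (ha : ∀ i, 0 < a i)
    (v : Fin (2 * k) ⊕ Fin 2 → MvPolynomial (Fin 2) ℤ)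
    (hv1 : ∀ i, v (Sum.inl i) = (a i : MvPolynomial (Fin 2) ℤ) * MvPolynomial.X 0)
    (hv2 : ∀ j, v (Sum.inr j) = MvPolynomial.X 1) :
    (∃ π : Finpartition (Finset.univ : Finset (Fin (2 * k) ⊕ Fin 2)),
      ∃ B₀ ∈ π.parts, ∏ j ∈ B₀, v j = ∑ B ∈ π.parts.erase B₀, ∏ j ∈ B, v j) ↔
    (∃ S : Finset (Fin (2 * k)), S.card = k ∧ ∏ i ∈ S, a i = ∏ i ∈ Sᶜ, a i) :=
  stmt_4_general k a ha v hv1 hv2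
end

section
/- Let q ≥ 1, let a : Fin (3q) → ℕ with a i > 0 for all i, and let s : ℕ satisfy ∑_i a i = q · s. In R = MvPolynomial (Option (Fin q)) ℤ write x = X none and y_j = X (some j), let ι = Fin (3q) ⊕ (Fin q × Fin 3), and define v : ι → R by v (inl i) = (a i) · x and v (inr (j, _)) = y_j. Then the following are equivalent: (1) there exist a finite partition π of ι into nonempty blocks and signs ε : blocks of π → ℤ, each ε B equal to 1 or −1 with ε B₀ = 1 for at least one block B₀, such that ∑_{B ∈ π} ε B · ∏_{j ∈ B} v j = s · (∑_{j} y_j) · x; (2) there exists a finite partition ρ of Fin (3q) such that every block B of ρ has B.card = 3 and ∑_{i ∈ B} a i = s. -/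
/-!
Comparing coefficients of the monomials `x * y_j` on both sides, only blocks of the form
`{inl i, inr (j, c)}` contribute, each with `± a i`. Since the blocks are disjoint, these pairs form
a matching between the numbers and the slots `Fin q × Fin 3`, and summing over `j` its signed
weights add up to `q * s = ∑ i, a i`. As every `a i` is positive, all signs are `+1` and every
number is matched, so the matching is a bijection `e : Fin q × Fin 3 ≃ Fin (3 * q)` whose rows have
sum `s`: a 3-partition. Conversely, for such an `e` the blocks `{inl (e p), inr p}` with all signs
`+1` realise the target.
-/

open Finset MvPolynomial

namespace ThreePartitionReduction

variable {α β κ γ M : Type*}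

theorem exists_finpartition_parts_eq_image [Fintype β] [DecidableEq β] [Fintype γ]
    (f : γ → Finset β) (g : β → γ) (hf : ∀ b c, b ∈ f c ↔ g b = c)
    (hne : ∀ c, (f c).Nonempty) :
    ∃ P : Finpartition (univ : Finset β), P.parts = univ.image f := by
  refine ⟨⟨univ.image f, ?_, ?_, ?_⟩, rfl⟩
  · rw [supIndep_iff_pairwiseDisjoint, coe_image, coe_univ, Set.image_univ]
    rintro _ ⟨c, rfl⟩ _ ⟨c', rfl⟩ hne'
    refine disjoint_left.2 fun b hb hb' => hne' ?_
    rw [← (hf b c).1 hb, ← (hf b c').1 hb']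
  · ext b
    simpa using ⟨g b, (hf b _).2 rfl⟩
  · simp only [bot_eq_empty, mem_image, mem_univ, true_and, not_exists]
    exact fun c h => (hne c).ne_empty h

theorem eq_iff_of_pair_mem_parts [DecidableEq α] [DecidableEq β] {s : Finset (α ⊕ β)}
    (P : Finpartition s) {i i' : α} {p p' : β}
    (h : {Sum.inl i, Sum.inr p} ∈ P.parts) (h' : {Sum.inl i', Sum.inr p'} ∈ P.parts) :
    i = i' ↔ p = p' := by
  constructor
  · rintro rfl
    have hB := P.eq_of_mem_parts (a := Sum.inl i) h h' (by simp) (by simp)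
    have : Sum.inr p ∈ ({Sum.inl i, Sum.inr p'} : Finset (α ⊕ β)) := hB ▸ by simp
    simpa using this
  · rintro rfl
    have hB := P.eq_of_mem_parts (a := Sum.inr p) h h' (by simp) (by simp)
    have : Sum.inl i ∈ ({Sum.inl i', Sum.inr p} : Finset (α ⊕ β)) := hB ▸ by simp
    simpa using this

theorem image_fst_eq_univ_and_eq_of_sum_eq [Fintype α] [DecidableEq α] [AddCommMonoid M]
    [LinearOrder M] [IsOrderedCancelAddMonoid M] {T : Finset (α × β)}
    (hT : Set.InjOn Prod.fst (T : Set (α × β))) {a : α → M} (ha : ∀ i, 0 < a i) {w : α × β → M}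
    (hw : ∀ x ∈ T, w x ≤ a x.1) (hsum : ∑ x ∈ T, w x = ∑ i, a i) :
    T.image Prod.fst = univ ∧ ∀ x ∈ T, w x = a x.1 := by
  have hle : ∑ x ∈ T, w x ≤ ∑ i ∈ T.image Prod.fst, a i := by
    rw [sum_image hT]
    exact sum_le_sum hw
  have hsub : ∑ i ∈ T.image Prod.fst, a i ≤ ∑ i, a i :=
    sum_le_sum_of_subset_of_nonneg (subset_univ _) fun i _ _ => (ha i).le
  refine ⟨?_, (sum_eq_sum_iff_of_le hw).1 ?_⟩
  · by_contra h
    obtain ⟨i, -, hi⟩ := exists_of_ssubset (ssubset_univ_iff.2 h)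
    have := sum_lt_sum_of_subset (subset_univ _) (mem_univ i) hi (ha i) fun j _ _ => (ha j).le
    exact (hle.trans_lt this).ne hsum
  · refine le_antisymm (sum_le_sum hw) ?_
    rwa [← sum_image hT, hsum]

theorem exists_equiv_mem_iff_of_injOn [Fintype α] [Fintype β] [DecidableEq α] [DecidableEq β]
    (hcard : Fintype.card α = Fintype.card β) {T : Finset (α × β)}
    (hfst : Set.InjOn Prod.fst (T : Set (α × β))) (hsnd : Set.InjOn Prod.snd (T : Set (α × β)))
    (hT : T.image Prod.fst = univ) :
    ∃ e : β ≃ α, ∀ x, x ∈ T ↔ x.1 = e x.2 := by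
  have hsndT : T.image Prod.snd = univ := by
    refine eq_univ_of_card _ ?_
    rw [card_image_of_injOn hsnd, ← hcard, ← card_image_of_injOn hfst, hT, card_univ]
  have hex : ∀ p : β, ∃ i, (i, p) ∈ T := fun p => by
    have : p ∈ T.image Prod.snd := by rw [hsndT]; exact mem_univ p
    simpa using this
  choose f hf using hex
  have hmem : ∀ x, x ∈ T ↔ x.1 = f x.2 := fun x =>
    ⟨fun hx => congrArg Prod.fst (hsnd hx (hf x.2) rfl),
      fun h => by rw [show x = (f x.2, x.2) from Prod.ext h rfl]; exact hf x.2⟩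
  have hinj : Function.Injective f := fun p p' h =>
    congrArg Prod.snd (hfst (hf p) (hf p') h)
  exact ⟨Equiv.ofBijective f ((Fintype.bijective_iff_injective_and_card f).2 ⟨hinj, hcard.symm⟩),
    hmem⟩

theorem exists_finpartition_iff_exists_equiv [Fintype α] [DecidableEq α] [Fintype κ]
    [Fintype γ] [Nonempty γ] [AddCommMonoid M]
    (hcard : Fintype.card α = Fintype.card κ * Fintype.card γ) (a : α → M) (s : M) :
    (∃ ρ : Finpartition (univ : Finset α),
      ∀ B ∈ ρ.parts, B.card = Fintype.card γ ∧ ∑ i ∈ B, a i = s) ↔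
    ∃ e : κ × γ ≃ α, ∀ j, ∑ c, a (e (j, c)) = s := by
  constructor
  · rintro ⟨ρ, hρ⟩
    have hparts : ρ.parts.card = Fintype.card κ := by
      have := ρ.sum_card_parts
      rw [sum_congr rfl fun B hB => (hρ B hB).1, sum_const, card_univ, hcard, smul_eq_mul] at this
      exact Nat.eq_of_mul_eq_mul_right Fintype.card_pos this
    let E : κ ≃ ρ.parts := Fintype.equivOfCardEq (by simpa using hparts.symm)
    let F : ∀ j, γ ≃ (E j : Finset α) := fun j =>
      Fintype.equivOfCardEq (by simpa using ((hρ _ (E j).2).1).symm)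
    refine ⟨(Equiv.sigmaEquivProd κ γ).symm.trans ((Equiv.sigmaCongr E F).trans
      (ρ.equivSigmaParts.symm.trans (Equiv.subtypeUnivEquiv mem_univ))), fun j => ?_⟩
    rw [← (hρ _ (E j).2).2, ← sum_coe_sort (E j : Finset α)]
    exact Equiv.sum_comp (F j) fun i => a i
  · rintro ⟨e, he⟩
    obtain ⟨ρ, hρ⟩ := exists_finpartition_parts_eq_image
      (fun j => univ.image fun c => e (j, c)) (fun i => (e.symm i).1)
      (fun i j => by
        simp only [mem_image, mem_univ, true_and]
        constructor
        · rintro ⟨c, rfl⟩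
          simp
        · rintro rfl
          exact ⟨(e.symm i).2, by simp⟩)
      (fun j => univ_nonempty.image _)
    refine ⟨ρ, fun B hB => ?_⟩
    rw [hρ] at hB
    obtain ⟨j, -, rfl⟩ := mem_image.1 hB
    have hinj : Function.Injective fun c => e (j, c) := fun c c' h => by simpa using h
    rw [card_image_of_injective _ hinj, sum_image fun c _ c' _ h => hinj h]
    exact ⟨card_univ, he j⟩

def atomVar : α ⊕ κ × γ → Option κ := Sum.elim (fun _ => none) (fun p => some p.1)

def atomCoeff (a : α → ℕ) : α ⊕ κ × γ → ℤ := Sum.elim (fun i => a i) (fun _ => 1)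

noncomputable def atom (a : α → ℕ) (z : α ⊕ κ × γ) : MvPolynomial (Option κ) ℤ :=
  monomial (Finsupp.single (atomVar z) 1) (atomCoeff a z)

theorem atom_inl (a : α → ℕ) (i : α) :
    atom (κ := κ) (γ := γ) a (Sum.inl i) = (a i : MvPolynomial (Option κ) ℤ) * X none := by
  rw [atom, ← map_natCast C, C_mul_X_eq_monomial]
  rfl

theorem atom_inr (a : α → ℕ) (j : κ) (c : γ) :
    atom a (Sum.inr (j, c)) = (X (some j) : MvPolynomial (Option κ) ℤ) := by
  rfl

theorem prod_atom (a : α → ℕ) (B : Finset (α ⊕ κ × γ)) :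
    ∏ z ∈ B, atom a z =
      monomial (∑ z ∈ B, Finsupp.single (atomVar z) 1) (∏ z ∈ B, atomCoeff a z) :=
  (monomial_sum_prod B _ _).symm

theorem sum_single_atomVar_eq_iff [DecidableEq α] [DecidableEq κ] [DecidableEq γ]
    {B : Finset (α ⊕ κ × γ)} {j : κ} :
    ∑ z ∈ B, Finsupp.single (atomVar z) 1 = Finsupp.single (some j) 1 + Finsupp.single none 1 ↔
      ∃ i c, B = {Sum.inl i, Sum.inr (j, c)} := by
  constructor
  · intro h
    have hcard : B.card = 2 := by
      simpa [map_sum, Finsupp.degree_single] using congrArg Finsupp.degree h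
    have hvar : ∀ k, k = some j ∨ k = none → ∃ z ∈ B, atomVar z = k := fun k hk => by
      have : k ∈ (∑ z ∈ B, Finsupp.single (atomVar z) 1).support := by
        rw [h]; rcases hk with rfl | rfl <;> simp
      simpa [eq_comm] using Finsupp.support_finsetSum this
    obtain ⟨⟨i⟩ | ⟨j', c⟩, hiB, hi⟩ := hvar none (Or.inr rfl)
    · obtain ⟨⟨i'⟩ | ⟨j', c⟩, hcB, hc⟩ := hvar (some j) (Or.inl rfl)
      · simp [atomVar] at hc
      · simp only [atomVar, Sum.elim_inr, Option.some.injEq] at hc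
        subst hc
        refine ⟨i, c, (eq_of_subset_of_card_le ?_ ?_).symm⟩
        · simp [insert_subset_iff, hiB, hcB]
        · simp [hcard]
    · simp [atomVar] at hi
  · rintro ⟨i, c, rfl⟩
    rw [sum_pair (by simp)]
    simp [atomVar, add_comm]

theorem coeff_sum_mul_prod_atom [Fintype α] [DecidableEq α] [DecidableEq κ] [Fintype γ]
    [DecidableEq γ]
    (a : α → ℕ) (P : Finset (Finset (α ⊕ κ × γ))) (ε : Finset (α ⊕ κ × γ) → ℤ) (j : κ) :
    coeff (Finsupp.single (some j) 1 + Finsupp.single none 1)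
        (∑ B ∈ P, (ε B : MvPolynomial (Option κ) ℤ) * ∏ z ∈ B, atom a z) =
      ∑ c, ∑ i, if {Sum.inl i, Sum.inr (j, c)} ∈ P then
        ε {Sum.inl i, Sum.inr (j, c)} * a i else 0 := by
  let pair : γ × α → Finset (α ⊕ κ × γ) := fun x => {Sum.inl x.2, Sum.inr (j, x.1)}
  have hpair : Function.Injective pair := fun x y h => by
    have : Sum.inl x.2 ∈ pair y ∧ Sum.inr (j, x.1) ∈ pair y := h ▸ by simp [pair]
    simpa [pair, Prod.ext_iff, and_comm] using this
  have hfilter : {B ∈ P | ∑ z ∈ B, Finsupp.single (atomVar z) 1 =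
      Finsupp.single (some j) 1 + Finsupp.single none 1} =
      Finset.image pair {x | pair x ∈ P} := by
    ext B
    simp only [mem_filter, sum_single_atomVar_eq_iff, mem_image, mem_univ, true_and, pair,
      Prod.exists]
    constructor
    · rintro ⟨hB, i, c, rfl⟩
      exact ⟨c, i, hB, rfl⟩
    · rintro ⟨c, i, hB, rfl⟩
      exact ⟨hB, i, c, rfl⟩
  calc _ = ∑ B ∈ P, if ∑ z ∈ B, Finsupp.single (atomVar z) 1 =
          Finsupp.single (some j) 1 + Finsupp.single none 1 then
          ε B * ∏ z ∈ B, atomCoeff a z else 0 := by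
        rw [coeff_sum]
        refine sum_congr rfl fun B _ => ?_
        rw [prod_atom, ← zsmul_eq_mul, coeff_smul, coeff_monomial, smul_eq_mul, mul_ite, mul_zero]
    _ = ∑ x ∈ {x | pair x ∈ P}, ε (pair x) * a x.2 := by
        rw [← sum_filter, hfilter, sum_image fun x _ y _ h => hpair h]
        refine sum_congr rfl fun x _ => ?_
        rw [prod_pair (by simp)]
        simp [atomCoeff]
    _ = _ := by
        rw [sum_filter, Fintype.sum_prod_type]

theorem coeff_natCast_mul_sum_X_mul_X [Fintype κ] [DecidableEq κ] (s : ℕ) (j : κ) :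
    coeff (Finsupp.single (some j) 1 + Finsupp.single none 1)
      ((s : MvPolynomial (Option κ) ℤ) * (∑ k : κ, X (some k)) * X none) = (s : ℤ) := by
  rw [coeff_mul_X, ← nsmul_eq_mul, coeff_smul, coeff_sum]
  simp [coeff_X, Finsupp.single_left_inj]

theorem exists_equiv_of_sum_blocks_eq [Fintype α] [DecidableEq α] [Fintype κ] [DecidableEq κ]
    [Fintype γ] [DecidableEq γ] (hcard : Fintype.card α = Fintype.card κ * Fintype.card γ)
    {a : α → ℕ} (ha : ∀ i, 0 < a i) {s : ℕ} (hs : ∑ i, a i = Fintype.card κ * s)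
    (π : Finpartition (univ : Finset (α ⊕ κ × γ))) (ε : Finset (α ⊕ κ × γ) → ℤ)
    (hε : ∀ B ∈ π.parts, ε B = 1 ∨ ε B = -1)
    (hsum : ∑ B ∈ π.parts, (ε B : MvPolynomial (Option κ) ℤ) * ∏ z ∈ B, atom a z =
      (s : MvPolynomial (Option κ) ℤ) * (∑ j : κ, X (some j)) * X none) :
    ∃ e : κ × γ ≃ α, ∀ j, ∑ c, a (e (j, c)) = s := by
  set T : Finset (α × (κ × γ)) := {x | {Sum.inl x.1, Sum.inr x.2} ∈ π.parts}
  set w : α × (κ × γ) → ℤ := fun x => ε {Sum.inl x.1, Sum.inr x.2} * a x.1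
  have hcoeff (j : κ) : ∑ c, ∑ i, (if {Sum.inl i, Sum.inr (j, c)} ∈ π.parts then
      ε {Sum.inl i, Sum.inr (j, c)} * a i else 0) = (s : ℤ) := by
    have := congrArg (coeff (Finsupp.single (some j) 1 + Finsupp.single none 1)) hsum
    rwa [coeff_sum_mul_prod_atom, coeff_natCast_mul_sum_X_mul_X] at this
  have hpair : ∀ x ∈ T, ∀ y ∈ T, (x.1 = y.1 ↔ x.2 = y.2) := fun x hx y hy =>
    eq_iff_of_pair_mem_parts π (mem_filter.1 hx).2 (mem_filter.1 hy).2
  have hfst : Set.InjOn Prod.fst (T : Set (α × (κ × γ))) := fun x hx y hy h =>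
    Prod.ext h ((hpair x hx y hy).1 h)
  have hsnd : Set.InjOn Prod.snd (T : Set (α × (κ × γ))) := fun x hx y hy h =>
    Prod.ext ((hpair x hx y hy).2 h) h
  have hw : ∀ x ∈ T, w x ≤ a x.1 := fun x hx => by
    rcases hε _ (mem_filter.1 hx).2 with h | h <;> simp [w, h]
  have htotal : ∑ x ∈ T, w x = ∑ i, (a i : ℤ) := by
    rw [sum_filter, Fintype.sum_prod_type, sum_comm]
    simp_rw [Fintype.sum_prod_type]
    rw [sum_congr rfl fun j _ => hcoeff j, sum_const, card_univ, ← Nat.cast_sum, hs]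
    simp
  obtain ⟨himage, hwa⟩ :=
    image_fst_eq_univ_and_eq_of_sum_eq hfst (fun i => Nat.cast_pos.2 (ha i)) hw htotal
  obtain ⟨e, he⟩ := exists_equiv_mem_iff_of_injOn (by simp [hcard]) hfst hsnd himage
  have hmem (i : α) (p : κ × γ) : {Sum.inl i, Sum.inr p} ∈ π.parts ↔ i = e p := by
    simpa [T] using he (i, p)
  have hval (p : κ × γ) : ε {Sum.inl (e p), Sum.inr p} * a (e p) = a (e p) :=
    hwa (e p, p) (by simpa [T] using (hmem _ _).2 rfl)
  refine ⟨e, fun j => ?_⟩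
  have := hcoeff j
  simp only [hmem, sum_ite_eq', mem_univ, if_true, hval] at this
  exact_mod_cast this

theorem exists_sum_blocks_eq_of_equiv [Fintype α] [DecidableEq α] [Fintype κ] [DecidableEq κ]
    [Nonempty κ] [Fintype γ] [DecidableEq γ] [Nonempty γ] (a : α → ℕ) (s : ℕ) (e : κ × γ ≃ α)
    (he : ∀ j, ∑ c, a (e (j, c)) = s) :
    ∃ π : Finpartition (univ : Finset (α ⊕ κ × γ)), ∃ ε : Finset (α ⊕ κ × γ) → ℤ,
      (∀ B ∈ π.parts, ε B = 1 ∨ ε B = -1) ∧ (∃ B₀ ∈ π.parts, ε B₀ = 1) ∧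
      ∑ B ∈ π.parts, (ε B : MvPolynomial (Option κ) ℤ) * ∏ z ∈ B, atom a z =
        (s : MvPolynomial (Option κ) ℤ) * (∑ j : κ, X (some j)) * X none := by
  let pair : κ × γ → Finset (α ⊕ κ × γ) := fun p => {Sum.inl (e p), Sum.inr p}
  obtain ⟨π, hπ⟩ := exists_finpartition_parts_eq_image pair (Sum.elim e.symm id)
    (fun z p => by rcases z with i | p' <;> simp [pair, Equiv.eq_symm_apply, eq_comm])
    (fun p => insert_nonempty _ _)
  have hinj : Function.Injective pair := fun p p' h => by
    have : Sum.inr p ∈ pair p' := h ▸ by simp [pair]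
    simpa [pair] using this
  refine ⟨π, fun _ => 1, fun _ _ => Or.inl rfl, ?_, ?_⟩
  · obtain ⟨p⟩ : Nonempty (κ × γ) := inferInstance
    exact ⟨pair p, hπ ▸ mem_image_of_mem _ (mem_univ p), rfl⟩
  · rw [hπ, sum_image fun p _ p' _ h => hinj h]
    calc ∑ p, ((1 : ℤ) : MvPolynomial (Option κ) ℤ) * ∏ z ∈ pair p, atom a z
        = ∑ j, ∑ c, (a (e (j, c)) : MvPolynomial (Option κ) ℤ) * X none * X (some j) := by
          rw [Fintype.sum_prod_type]
          refine sum_congr rfl fun j _ => sum_congr rfl fun c _ => ?_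
          rw [prod_pair (by simp), atom_inl, atom_inr, Int.cast_one, one_mul]
      _ = _ := by
          simp_rw [← sum_mul, ← Nat.cast_sum, he, mul_sum, sum_mul]
          exact sum_congr rfl fun j _ => by ring

theorem exists_sum_blocks_eq_iff_exists_equiv [Fintype α] [DecidableEq α] [Fintype κ]
    [DecidableEq κ] [Nonempty κ] [Fintype γ] [DecidableEq γ] [Nonempty γ]
    (hcard : Fintype.card α = Fintype.card κ * Fintype.card γ)
    {a : α → ℕ} (ha : ∀ i, 0 < a i) {s : ℕ} (hs : ∑ i, a i = Fintype.card κ * s) :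
    (∃ π : Finpartition (univ : Finset (α ⊕ κ × γ)), ∃ ε : Finset (α ⊕ κ × γ) → ℤ,
      (∀ B ∈ π.parts, ε B = 1 ∨ ε B = -1) ∧ (∃ B₀ ∈ π.parts, ε B₀ = 1) ∧
      ∑ B ∈ π.parts, (ε B : MvPolynomial (Option κ) ℤ) * ∏ z ∈ B, atom a z =
        (s : MvPolynomial (Option κ) ℤ) * (∑ j : κ, X (some j)) * X none) ↔
    ∃ e : κ × γ ≃ α, ∀ j, ∑ c, a (e (j, c)) = s :=
  ⟨fun ⟨π, ε, hε, _, hsum⟩ => exists_equiv_of_sum_blocks_eq hcard ha hs π ε hε hsum,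
    fun ⟨e, he⟩ => exists_sum_blocks_eq_of_equiv a s e he⟩

end ThreePartitionReduction

open ThreePartitionReduction

theorem stmt_6 (q : ℕ) (hq : 1 ≤ q) (a : Fin (3 * q) → ℕ) (ha : ∀ i, 0 < a i)
    (s : ℕ) (hs : ∑ i, a i = q * s)
    (v : Fin (3 * q) ⊕ (Fin q × Fin 3) → MvPolynomial (Option (Fin q)) ℤ)
    (hv1 : ∀ i, v (Sum.inl i) =
      (a i : MvPolynomial (Option (Fin q)) ℤ) * MvPolynomial.X none)
    (hv2 : ∀ (j : Fin q) (c : Fin 3), v (Sum.inr (j, c)) = MvPolynomial.X (some j)) :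
    (∃ π : Finpartition (Finset.univ : Finset (Fin (3 * q) ⊕ (Fin q × Fin 3))),
      ∃ ε : Finset (Fin (3 * q) ⊕ (Fin q × Fin 3)) → ℤ,
        (∀ B ∈ π.parts, ε B = 1 ∨ ε B = -1) ∧ (∃ B₀ ∈ π.parts, ε B₀ = 1) ∧
        ∑ B ∈ π.parts, (ε B : MvPolynomial (Option (Fin q)) ℤ) * ∏ j ∈ B, v j
          = (s : MvPolynomial (Option (Fin q)) ℤ) *
              (∑ j : Fin q, MvPolynomial.X (some j)) * MvPolynomial.X none) ↔
    (∃ ρ : Finpartition (Finset.univ : Finset (Fin (3 * q))),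
      ∀ B ∈ ρ.parts, B.card = 3 ∧ ∑ i ∈ B, a i = s) := by
  have hv : v = atom a := funext fun z => by
    rcases z with i | ⟨j, c⟩
    · rw [hv1, atom_inl]
    · rw [hv2, atom_inr]
  subst hv
  have : Nonempty (Fin q) := ⟨⟨0, hq⟩⟩
  have hcard : Fintype.card (Fin (3 * q)) = Fintype.card (Fin q) * Fintype.card (Fin 3) := by
    simp [mul_comm]
  rw [exists_sum_blocks_eq_iff_exists_equiv hcard ha (by simpa using hs),
    ← exists_finpartition_iff_exists_equiv hcard, Fintype.card_fin]
end

section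
/- Let k ≥ 1, let a : Fin (2k) → ℕ with a i > 0 for all i, and let m : ℕ satisfy ∏_i a i = m². In the fraction field F of MvPolynomial (Fin 2) ℚ write x, y for the images of X 0, X 1, let ι = Fin (2k) ⊕ Fin 2, and define v : ι → F by v (inl 0) = a 0 · x · y, v (inl i) = a i · x for i ≠ 0, v (inr 0) = m · x^k, and v (inr 1) = m · x^k · y. Then the following are equivalent: (1) there exist a finite partition π of ι into nonempty blocks and, for each block B, a distinguished element d(B) ∈ B, such that ∑_{B ∈ π} v (d B) / ∏_{j ∈ B, j ≠ d B} v j = 2 in F; (2) there exists S : Finset (Fin (2k)) with S.card = k and ∏_{i ∈ S} a i = m. -/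
/-!
Each `v j` is the image of a monomial with positive coefficient, so each block value is a
Laurent monomial with positive coefficient. Such terms cannot cancel, so a block sum equal to the
constant `2` forces every block to be balanced: its dividend has the same `x`- and `y`-degree as
the product of its divisors. Balance in `y` puts `inl 0` and `inr 1` into one block; balance in `x`
(each `inl i` has degree `1`, each `inr j` degree `k`) then leaves exactly the two blocks
`{inr 1} ∪ inl '' S` and `{inr 0} ∪ inl '' Sᶜ` with `|S| = k`. With `t = (∏_{i ∈ S} a i) / m`
their values lie in `{t, t⁻¹}` (as `∏ a = m²`), and a sum of two of these equals `2` only if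
`t = 1`. Conversely, such an `S`, replaced by `Sᶜ` if necessary so that `0 ∈ S`, gives the two
blocks above with dividends `inr 1` and `inr 0`, both of value `1`.
-/

open Finset MvPolynomial

namespace MvPolynomial

variable {R σ ι K : Type*}

theorem eq_of_sum_monomial_eq_monomial [CommSemiring R] [PartialOrder R]
    [IsOrderedCancelAddMonoid R] {s : Finset ι} {μ : ι → σ →₀ ℕ} {c : ι → R}
    (hc : ∀ b ∈ s, 0 < c b) {μ₀ : σ →₀ ℕ} {c₀ : R}
    (h : ∑ b ∈ s, monomial (μ b) (c b) = monomial μ₀ c₀) {b : ι} (hb : b ∈ s) : μ b = μ₀ := by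
  classical
  by_contra hne
  have hcoeff := congrArg (coeff (μ b)) h
  simp only [coeff_sum, coeff_monomial, if_neg (Ne.symm hne)] at hcoeff
  refine (sum_pos' (fun b' hb' => ?_) ⟨b, hb, by simpa using hc b hb⟩).ne' hcoeff
  split_ifs
  exacts [(hc b' hb').le, le_rfl]

theorem monomial_single_add_single [CommSemiring R] (i j : σ) (e f : ℕ) (c : R) :
    monomial (Finsupp.single i e + Finsupp.single j f) c = C c * X i ^ e * X j ^ f := by
  simp [X_pow_eq_monomial, C_mul_monomial, monomial_mul]

variable [Field R] [Field K] [Algebra (MvPolynomial σ R) K] [IsFractionRing (MvPolynomial σ R) K]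

theorem algebraMap_monomial_div_monomial (μ : σ →₀ ℕ) (c d : R) :
    algebraMap (MvPolynomial σ R) K (monomial μ c) /
      algebraMap (MvPolynomial σ R) K (monomial μ d) =
        algebraMap (MvPolynomial σ R) K (C (c / d)) := by
  rcases eq_or_ne d 0 with rfl | hd
  · simp
  rw [div_eq_iff, ← map_mul, C_mul_monomial, div_mul_cancel₀ _ hd]
  exact (map_ne_zero_iff _ (IsFractionRing.injective _ K)).2 (by simpa using hd)

variable [LinearOrder R] [IsStrictOrderedRing R]

theorem eq_of_sum_div_monomial_eq_C {s : Finset ι} {μ ν : ι → σ →₀ ℕ} {c d : ι → R}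
    (hc : ∀ b ∈ s, 0 < c b) (hd : ∀ b ∈ s, 0 < d b) {r : R}
    (h : ∑ b ∈ s, algebraMap (MvPolynomial σ R) K (monomial (μ b) (c b)) /
      algebraMap (MvPolynomial σ R) K (monomial (ν b) (d b)) =
        algebraMap (MvPolynomial σ R) K (C r)) {b : ι} (hb : b ∈ s) : μ b = ν b := by
  classical
  have hinj := IsFractionRing.injective (MvPolynomial σ R) K
  have hq : ∀ b ∈ s, algebraMap (MvPolynomial σ R) K (monomial (ν b) (d b)) ≠ 0 := fun b hb =>
    (map_ne_zero_iff _ hinj).2 (by simpa using (hd b hb).ne')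
  have hcleared : ∑ b ∈ s, monomial (μ b + ∑ b' ∈ s.erase b, ν b')
      (c b * ∏ b' ∈ s.erase b, d b') = monomial (∑ b ∈ s, ν b) (r * ∏ b ∈ s, d b) := by
    apply hinj
    have := congrArg (· * ∏ b ∈ s, algebraMap (MvPolynomial σ R) K (monomial (ν b) (d b))) h
    simp only [sum_mul] at this
    rw [← C_mul_monomial, monomial_sum_prod, map_sum, map_mul, map_prod, ← this]
    refine sum_congr rfl fun b hb => ?_
    rw [← mul_prod_erase _ _ hb, ← monomial_mul, monomial_sum_prod, map_mul, map_prod]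
    field_simp [hq b hb]
  have := eq_of_sum_monomial_eq_monomial (fun b hb => mul_pos (hc b hb)
    (prod_pos fun b' hb' => hd b' (mem_of_mem_erase hb'))) hcleared hb
  rw [← add_sum_erase _ _ hb] at this
  exact add_right_cancel this

theorem sum_div_eq_of_sum_div_monomial_eq_C {s : Finset ι} {μ ν : ι → σ →₀ ℕ} {c d : ι → R}
    (hc : ∀ b ∈ s, 0 < c b) (hd : ∀ b ∈ s, 0 < d b) {r : R}
    (h : ∑ b ∈ s, algebraMap (MvPolynomial σ R) K (monomial (μ b) (c b)) /
      algebraMap (MvPolynomial σ R) K (monomial (ν b) (d b)) =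
        algebraMap (MvPolynomial σ R) K (C r)) : ∑ b ∈ s, c b / d b = r := by
  rw [sum_congr rfl fun b hb => by rw [eq_of_sum_div_monomial_eq_C hc hd h hb,
    algebraMap_monomial_div_monomial], ← map_sum, ← map_sum] at h
  exact C_injective σ R (IsFractionRing.injective _ K h)

end MvPolynomial

theorem Finset.sum_eq_add_of_eq_sum_erase {ι M : Type*} [DecidableEq ι] [AddCommMonoid M]
    {B : Finset ι} {d : ι} (w : ι → M) (hd : d ∈ B) (h : w d = ∑ j ∈ B.erase d, w j) :
    ∑ j ∈ B, w j = w d + w d := by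
  rw [← add_sum_erase _ _ hd, ← h]

theorem Finset.eq_of_subset_of_sum_le {ι M : Type*} [AddCommMonoid M] [PartialOrder M]
    [IsOrderedCancelAddMonoid M] {s t : Finset ι} {w : ι → M} (h : s ⊆ t)
    (hw : ∀ i ∈ t, 0 < w i) (hsum : ∑ i ∈ t, w i ≤ ∑ i ∈ s, w i) : s = t := by
  by_contra hne
  obtain ⟨i, hi, his⟩ := exists_of_ssubset (ssubset_of_subset_of_ne h hne)
  exact (sum_lt_sum_of_subset h hi his (hw i hi) fun j hj _ => (hw j hj).le).not_ge hsum

theorem Finpartition.parts_eq_pair_compl {α : Type*} [Fintype α] [DecidableEq α]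
    {P : Finpartition (univ : Finset α)} {B : Finset α} (hB : B ∈ P.parts) (hBc : Bᶜ ∈ P.parts) :
    P.parts = {B, Bᶜ} := by
  ext C
  refine ⟨fun hC => ?_, fun hC => ?_⟩
  · obtain ⟨j, hj⟩ := P.nonempty_of_mem_parts hC
    by_cases hjB : j ∈ B
    · simp [P.eq_of_mem_parts hC hB hj hjB]
    · simp [P.eq_of_mem_parts hC hBc hj (mem_compl.2 hjB)]
  · rcases mem_insert.1 hC with rfl | hC
    exacts [hB, mem_singleton.1 hC ▸ hBc]

theorem Finset.compl_disjSum {α β : Type*} [Fintype α] [Fintype β] [DecidableEq α] [DecidableEq β]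
    (s : Finset α) (t : Finset β) : (s.disjSum t)ᶜ = sᶜ.disjSum tᶜ := by
  ext (a | b) <;> simp

section Arithmetic

variable {K : Type*} [Field K]

theorem div_eq_or_of_mul_eq {m P u w : K} (hm : m ≠ 0) (h : u * w = P * m)
    (hm' : u = m ∨ w = m) : u / w = m / P ∨ u / w = P / m := by
  rcases hm' with rfl | rfl
  · left
    rw [mul_comm P, mul_right_inj' hm] at h
    rw [h]
  · right
    rw [mul_left_inj' hm] at h
    rw [h]

variable [LinearOrder K] [IsStrictOrderedRing K]

theorem eq_of_add_eq_two {m P Q u w : K} (hm : 0 < m) (hP : 0 < P) (hPQ : P * Q = m ^ 2)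
    (hu : u = m / P ∨ u = P / m) (hw : w = m / Q ∨ w = Q / m) (h : u + w = 2) : P = m := by
  obtain rfl : Q = m ^ 2 / P := by field_simp; linarith
  have hsq : (P - m) ^ 2 = 0 := by
    rcases hu with rfl | rfl <;> rcases hw with rfl | rfl <;> field_simp at h <;> nlinarith
  exact sub_eq_zero.1 (pow_eq_zero_iff two_ne_zero |>.1 hsq)

variable {ι : Type*} [Fintype ι] {a : ι → ℕ} {m : ℕ}

theorem pos_of_prod_eq_sq (ha : ∀ i, 0 < a i) (hm : ∏ i, a i = m ^ 2) : 0 < m := by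
  have := prod_pos fun i (_ : i ∈ univ) => ha i
  rw [hm] at this
  exact pos_of_ne_zero (by rintro rfl; simp at this)

theorem prod_compl_eq_of_prod_eq [DecidableEq ι] (hm : ∏ i, a i = m ^ 2) (hm0 : 0 < m)
    {S : Finset ι} (hSa : ∏ i ∈ S, a i = m) : ∏ i ∈ Sᶜ, a i = m := by
  have := prod_mul_prod_compl S a
  rw [hSa, hm, sq] at this
  exact Nat.eq_of_mul_eq_mul_left hm0 this

end Arithmetic

namespace ProductPartitionReduction

variable {α : Type*} {k : ℕ} {i₀ : α}

def degX (k : ℕ) : α ⊕ Fin 2 → ℕ := Sum.elim (fun _ => 1) (fun _ => k)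

theorem degX_pos (hk : 0 < k) (j : α ⊕ Fin 2) : 0 < degX k j := by
  rcases j with _ | _ <;> simp [degX, hk]

variable [DecidableEq α]

def degY (i₀ : α) : α ⊕ Fin 2 → ℕ := Sum.elim (fun i => if i = i₀ then 1 else 0) (fun j => j)

theorem sum_degY (B : Finset (α ⊕ Fin 2)) :
    ∑ j ∈ B, degY i₀ j = (if .inl i₀ ∈ B then 1 else 0) + (if .inr 1 ∈ B then 1 else 0) := by
  have hpt (j : α ⊕ Fin 2) :
      degY i₀ j = (if j = .inl i₀ then 1 else 0) + (if j = .inr 1 then 1 else 0) := by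
    rcases j with i | j
    · simp [degY]
    · fin_cases j <;> simp [degY]
  simp only [hpt, sum_add_distrib, sum_ite_eq']

theorem inr_one_mem_of_inl_mem {B : Finset (α ⊕ Fin 2)} {d : α ⊕ Fin 2} (hd : d ∈ B)
    (hY : degY i₀ d = ∑ j ∈ B.erase d, degY i₀ j) (h : .inl i₀ ∈ B) : .inr 1 ∈ B := by
  have := sum_eq_add_of_eq_sum_erase _ hd hY
  rw [sum_degY, if_pos h] at this
  split_ifs at this with h1
  · exact h1
  · omega

theorem eq_inr_or_erase_eq_singleton_inr (hk : 0 < k) {B : Finset (α ⊕ Fin 2)}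
    {d : α ⊕ Fin 2} (hX : degX k d = ∑ j ∈ B.erase d, degX k j) {j : Fin 2}
    (hj : .inr j ∈ B) : (∃ j', d = .inr j') ∨ ∃ j', B.erase d = {.inr j'} := by
  rcases d with i | j'
  · right
    refine ⟨j, ?_⟩
    have hjB : .inr j ∈ B.erase (.inl i) := mem_erase.2 ⟨Sum.inr_ne_inl, hj⟩
    rw [← add_sum_erase _ _ hjB] at hX
    change 1 = k + _ at hX
    have hrest : (B.erase (.inl i)).erase (.inr j) = ∅ := by
      by_contra hne
      obtain ⟨j', hj'⟩ := nonempty_iff_ne_empty.2 hne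
      have := single_le_sum (f := degX k) (fun _ _ => Nat.zero_le _) hj'
      have := degX_pos hk j'
      omega
    exact ((erase_eq_empty_iff _ _).1 hrest).resolve_left (ne_empty_of_mem hjB)
  · exact .inl ⟨j', rfl⟩

theorem sum_degX_eq_of_inr_mem (hk : 0 < k) {B : Finset (α ⊕ Fin 2)} {d : α ⊕ Fin 2}
    (hd : d ∈ B) (hX : degX k d = ∑ j ∈ B.erase d, degX k j) {j : Fin 2} (hj : .inr j ∈ B) :
    ∑ j ∈ B, degX k j = 2 * k := by
  rw [sum_eq_add_of_eq_sum_erase _ hd hX]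
  rcases eq_inr_or_erase_eq_singleton_inr hk hX hj with ⟨j', rfl⟩ | ⟨j', hB⟩
  · simp [degX]; ring
  · rw [hX, hB]; simp [degX]; ring

theorem exists_parts_eq_disjSum_pair [Fintype α] (hα : Fintype.card α = 2 * k)
    (π : Finpartition (univ : Finset (α ⊕ Fin 2))) (d : Finset (α ⊕ Fin 2) → α ⊕ Fin 2)
    (hd : ∀ B ∈ π.parts, d B ∈ B)
    (hX : ∀ B ∈ π.parts, degX k (d B) = ∑ j ∈ B.erase (d B), degX k j)
    (hY : ∀ B ∈ π.parts, degY i₀ (d B) = ∑ j ∈ B.erase (d B), degY i₀ j) :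
    ∃ S : Finset α, #S = k ∧ π.parts = {S.disjSum {1}, Sᶜ.disjSum {0}} := by
  have hk : 0 < k := by
    have := Fintype.card_pos_iff.2 ⟨i₀⟩
    omega
  obtain ⟨B₀, hB₀, hi₀⟩ := π.exists_mem (mem_univ (.inl i₀))
  obtain ⟨C₀, hC₀, h0C⟩ := π.exists_mem (mem_univ (.inr 0))
  have h1B : .inr 1 ∈ B₀ := inr_one_mem_of_inl_mem (hd _ hB₀) (hY _ hB₀) hi₀
  have hB₀X := sum_degX_eq_of_inr_mem hk (hd _ hB₀) (hX _ hB₀) h1B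
  have hC₀X := sum_degX_eq_of_inr_mem hk (hd _ hC₀) (hX _ hC₀) h0C
  have h0B : .inr 0 ∉ B₀ := by
    intro h0B
    have : ∑ j ∈ ({.inl i₀, .inr 0, .inr 1} : Finset (α ⊕ Fin 2)), degX k j ≤
        ∑ j ∈ B₀, degX k j :=
      sum_le_sum_of_subset (by simp [insert_subset_iff, hi₀, h0B, h1B])
    rw [hB₀X] at this
    simp [degX] at this
    omega
  have hcompl : C₀ = B₀ᶜ := by
    have huniv : ∑ j, degX (α := α) k j = 4 * k := by
      simp [degX, Fintype.sum_sum_type, hα]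
      ring
    rw [← sum_add_sum_compl B₀, hB₀X] at huniv
    refine eq_of_subset_of_sum_le (w := degX k) ?_ (fun j _ => degX_pos hk j) (by omega)
    exact subset_compl_iff_disjoint_right.2 <| π.disjoint hC₀ hB₀ fun h => h0B (h ▸ h0C)
  have hB₀eq : B₀ = B₀.toLeft.disjSum {1} := by
    ext (i | j)
    · simp
    · fin_cases j <;> simp [h0B, h1B]
  have hparts := Finpartition.parts_eq_pair_compl hB₀ (hcompl ▸ hC₀)
  generalize B₀.toLeft = S at hB₀eq
  subst hB₀eq
  refine ⟨S, ?_, by rw [hparts, compl_disjSum]; rfl⟩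
  rw [sum_disjSum] at hB₀X
  simp [degX] at hB₀X
  omega

noncomputable def degs (k : ℕ) (i₀ : α) (j : α ⊕ Fin 2) : Fin 2 →₀ ℕ :=
  Finsupp.single 0 (degX k j) + Finsupp.single 1 (degY i₀ j)

def coef (a : α → ℕ) (m : ℕ) : α ⊕ Fin 2 → ℕ := Sum.elim a fun _ => m

noncomputable def term (k : ℕ) (i₀ : α) (a : α → ℕ) (m : ℕ) (j : α ⊕ Fin 2) :
    MvPolynomial (Fin 2) ℚ :=
  monomial (degs k i₀ j) (coef a m j)

theorem degs_eq_sum_iff {d : α ⊕ Fin 2} {T : Finset (α ⊕ Fin 2)} :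
    degs k i₀ d = ∑ j ∈ T, degs k i₀ j ↔
      degX k d = ∑ j ∈ T, degX k j ∧ degY i₀ d = ∑ j ∈ T, degY i₀ j := by
  simp [Finsupp.ext_iff, Fin.forall_fin_two, degs, Finsupp.finsetSum_apply]

variable {K : Type*} [Field K] [Algebra (MvPolynomial (Fin 2) ℚ) K] {a : α → ℕ} {m : ℕ}

theorem algebraMap_term (j : α ⊕ Fin 2) :
    algebraMap _ K (term k i₀ a m j) = coef a m j *
      algebraMap (MvPolynomial (Fin 2) ℚ) K (X 0) ^ degX k j *
        algebraMap (MvPolynomial (Fin 2) ℚ) K (X 1) ^ degY i₀ j := by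
  simp [term, degs, monomial_single_add_single]

theorem eq_algebraMap_term {v : α ⊕ Fin 2 → K}
    (hv0 : v (.inl i₀) = a i₀ * algebraMap (MvPolynomial (Fin 2) ℚ) K (X 0) *
      algebraMap (MvPolynomial (Fin 2) ℚ) K (X 1))
    (hv1 : ∀ i ≠ i₀, v (.inl i) = a i * algebraMap (MvPolynomial (Fin 2) ℚ) K (X 0))
    (hv2 : v (.inr 0) = m * algebraMap (MvPolynomial (Fin 2) ℚ) K (X 0) ^ k)
    (hv3 : v (.inr 1) = m * algebraMap (MvPolynomial (Fin 2) ℚ) K (X 0) ^ k *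
      algebraMap (MvPolynomial (Fin 2) ℚ) K (X 1)) :
    v = fun j => algebraMap _ K (term k i₀ a m j) := by
  funext j
  rw [algebraMap_term]
  rcases j with i | j
  · by_cases h : i = i₀
    · subst h
      simp [hv0, degX, degY, coef]
    · simp [hv1 i h, degX, degY, coef, h]
  · fin_cases j
    · simp [hv2, degX, degY, coef]
    · simp [hv3, degX, degY, coef]

theorem prod_algebraMap_term (T : Finset (α ⊕ Fin 2)) :
    ∏ j ∈ T, algebraMap _ K (term k i₀ a m j) =
      algebraMap _ K (monomial (∑ j ∈ T, degs k i₀ j) (∏ j ∈ T, (coef a m j : ℚ))) := by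
  rw [monomial_sum_prod, map_prod]
  rfl

theorem coef_div_prod_eq_or (hk : 0 < k) (hm : m ≠ 0) {T : Finset α} {j : Fin 2}
    {d : α ⊕ Fin 2} (hd : d ∈ T.disjSum {j})
    (hX : degX k d = ∑ j' ∈ (T.disjSum {j}).erase d, degX k j') :
    (coef a m d : ℚ) / ∏ j' ∈ (T.disjSum {j}).erase d, (coef a m j' : ℚ) =
        m / ∏ i ∈ T, (a i : ℚ) ∨
      (coef a m d : ℚ) / ∏ j' ∈ (T.disjSum {j}).erase d, (coef a m j' : ℚ) =
        (∏ i ∈ T, (a i : ℚ)) / m := by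
  refine div_eq_or_of_mul_eq (Nat.cast_ne_zero.2 hm) ?_ ?_
  · rw [mul_prod_erase _ (fun j' => (coef a m j' : ℚ)) hd, prod_disjSum]
    simp [coef]
  · rcases eq_inr_or_erase_eq_singleton_inr hk hX (j := j) (by simp) with ⟨j', rfl⟩ | ⟨j', h⟩
    · simp [coef]
    · simp [h, coef]

variable [IsFractionRing (MvPolynomial (Fin 2) ℚ) K]

theorem algebraMap_term_inr_div_prod_eq_one (hm : m ≠ 0) {T : Finset α} {j : Fin 2}
    (hT : #T = k) (hY : (j : ℕ) = if i₀ ∈ T then 1 else 0) (hTa : ∏ i ∈ T, a i = m) :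
    algebraMap _ K (term k i₀ a m (.inr j)) /
      ∏ j' ∈ (T.disjSum {j}).erase (.inr j), algebraMap _ K (term k i₀ a m j') = 1 := by
  have herase : (T.disjSum {j}).erase (.inr j) = T.map .inl := by
    ext (i | j') <;> simp
  have hdeg : degs k i₀ (.inr j) = ∑ j' ∈ T.map .inl, degs k i₀ j' :=
    degs_eq_sum_iff.2 ⟨by simp [degX, hT], by simp [degY, hY]⟩
  have hcoef : (coef a m (.inr j) : ℚ) = ∏ j' ∈ T.map .inl, (coef a m j' : ℚ) := by
    simp [coef, ← hTa]
  rw [herase, prod_algebraMap_term, ← hdeg, ← hcoef, term, div_self]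
  exact (map_ne_zero_iff _ (IsFractionRing.injective _ K)).2 (by simpa [coef] using hm)

variable [Fintype α]

theorem exists_card_eq_prod_eq_of_sum_eq_two (hα : Fintype.card α = 2 * k)
    (ha : ∀ i, 0 < a i) (hm : ∏ i, a i = m ^ 2)
    (π : Finpartition (univ : Finset (α ⊕ Fin 2))) (d : Finset (α ⊕ Fin 2) → α ⊕ Fin 2)
    (hd : ∀ B ∈ π.parts, d B ∈ B)
    (hsum : ∑ B ∈ π.parts, algebraMap _ K (term k i₀ a m (d B)) /
      ∏ j ∈ B.erase (d B), algebraMap _ K (term k i₀ a m j) = 2) :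
    ∃ S : Finset α, #S = k ∧ ∏ i ∈ S, a i = m := by
  have hk : 0 < k := by
    have := Fintype.card_pos_iff.2 ⟨i₀⟩
    omega
  have hm0 := pos_of_prod_eq_sq ha hm
  have hcoef : ∀ j, (0 : ℚ) < coef a m j := by
    rintro (i | j) <;> simp [coef, ha, hm0]
  simp only [prod_algebraMap_term] at hsum
  simp only [term] at hsum
  rw [show (2 : K) = algebraMap (MvPolynomial (Fin 2) ℚ) K (C 2) by
    rw [map_ofNat, map_ofNat]] at hsum
  have hdeg := fun B (hB : B ∈ π.parts) => degs_eq_sum_iff.1 <|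
    eq_of_sum_div_monomial_eq_C (fun B _ => hcoef _) (fun B _ => prod_pos fun j _ => hcoef j)
      hsum hB
  have hratio := sum_div_eq_of_sum_div_monomial_eq_C (fun B _ => hcoef _)
    (fun B _ => prod_pos fun j _ => hcoef j) hsum
  obtain ⟨S, hS, hparts⟩ := exists_parts_eq_disjSum_pair hα π d hd
    (fun B hB => (hdeg B hB).1) (fun B hB => (hdeg B hB).2)
  have hB₀ : S.disjSum {1} ∈ π.parts := by simp [hparts]
  have hC₀ : Sᶜ.disjSum {0} ∈ π.parts := by simp [hparts]
  rw [hparts, sum_pair (by simp)] at hratio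
  refine ⟨S, hS, ?_⟩
  have hP : (0 : ℚ) < ∏ i ∈ S, (a i : ℚ) := prod_pos fun i _ => by simp [ha]
  have hPQ : (∏ i ∈ S, (a i : ℚ)) * ∏ i ∈ Sᶜ, (a i : ℚ) = (m : ℚ) ^ 2 := by
    rw [prod_mul_prod_compl]
    exact_mod_cast hm
  exact_mod_cast eq_of_add_eq_two (by exact_mod_cast hm0) hP hPQ
    (coef_div_prod_eq_or hk hm0.ne' (hd _ hB₀) (hdeg _ hB₀).1)
    (coef_div_prod_eq_or hk hm0.ne' (hd _ hC₀) (hdeg _ hC₀).1) hratio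

theorem exists_finpartition_sum_eq_two (hα : Fintype.card α = 2 * k) (ha : ∀ i, 0 < a i)
    (hm : ∏ i, a i = m ^ 2) {S : Finset α} (hS : #S = k) (hSa : ∏ i ∈ S, a i = m) :
    ∃ π : Finpartition (univ : Finset (α ⊕ Fin 2)),
      ∃ d : Finset (α ⊕ Fin 2) → α ⊕ Fin 2, (∀ B ∈ π.parts, d B ∈ B) ∧
        ∑ B ∈ π.parts, algebraMap _ K (term k i₀ a m (d B)) /
          ∏ j ∈ B.erase (d B), algebraMap _ K (term k i₀ a m j) = 2 := by
  have hm0 := pos_of_prod_eq_sq ha hm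
  wlog hi₀ : i₀ ∈ S generalizing S
  · exact this (S := Sᶜ) (by rw [card_compl, hα, hS]; omega)
      (prod_compl_eq_of_prod_eq hm hm0 hSa) (by simpa using hi₀)
  set B : Finset (α ⊕ Fin 2) := S.disjSum {1}
  have hBc : Bᶜ = Sᶜ.disjSum {0} := by rw [compl_disjSum]; rfl
  have hB : B ≠ ⊥ := ne_empty_of_mem (a := .inr 1) (by simp [B])
  have hB' : Bᶜ ≠ ⊥ := ne_empty_of_mem (a := .inr 0) (by simp [hBc])
  refine ⟨(Finpartition.indiscrete hB).extend hB' disjoint_compl_right (by simp),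
    fun B => if .inr 1 ∈ B then .inr 1 else .inr 0, ?_, ?_⟩
  · simp [hBc, B]
  · simp only [Finpartition.extend_parts, Finpartition.indiscrete_parts]
    rw [sum_pair (by simp), hBc, if_neg (by simp), if_pos (by simp [B]),
      algebraMap_term_inr_div_prod_eq_one hm0.ne' (by rw [card_compl, hα, hS]; omega)
        (by simp [hi₀]) (prod_compl_eq_of_prod_eq hm hm0 hSa),
      algebraMap_term_inr_div_prod_eq_one hm0.ne' hS (by simp [hi₀]) hSa]
    norm_num

theorem exists_finpartition_sum_eq_two_iff (hα : Fintype.card α = 2 * k) (ha : ∀ i, 0 < a i)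
    (hm : ∏ i, a i = m ^ 2) :
    (∃ π : Finpartition (univ : Finset (α ⊕ Fin 2)),
      ∃ d : Finset (α ⊕ Fin 2) → α ⊕ Fin 2, (∀ B ∈ π.parts, d B ∈ B) ∧
        ∑ B ∈ π.parts, algebraMap _ K (term k i₀ a m (d B)) /
          ∏ j ∈ B.erase (d B), algebraMap _ K (term k i₀ a m j) = 2) ↔
      ∃ S : Finset α, #S = k ∧ ∏ i ∈ S, a i = m :=
  ⟨fun ⟨π, d, hd, hsum⟩ => exists_card_eq_prod_eq_of_sum_eq_two hα ha hm π d hd hsum,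
    fun ⟨_, hS, hSa⟩ => exists_finpartition_sum_eq_two hα ha hm hS hSa⟩

end ProductPartitionReduction

theorem stmt_7 (k : ℕ) (hk : 1 ≤ k) (a : Fin (2 * k) → ℕ) (ha : ∀ i, 0 < a i)
    (m : ℕ) (hm : ∏ i, a i = m ^ 2)
    (x y : FractionRing (MvPolynomial (Fin 2) ℚ))
    (hx : x = algebraMap (MvPolynomial (Fin 2) ℚ)
      (FractionRing (MvPolynomial (Fin 2) ℚ)) (MvPolynomial.X 0))
    (hy : y = algebraMap (MvPolynomial (Fin 2) ℚ)
      (FractionRing (MvPolynomial (Fin 2) ℚ)) (MvPolynomial.X 1))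
    (v : Fin (2 * k) ⊕ Fin 2 → FractionRing (MvPolynomial (Fin 2) ℚ))
    (hv0 : ∀ i : Fin (2 * k), (i : ℕ) = 0 →
      v (Sum.inl i) = (a i : FractionRing (MvPolynomial (Fin 2) ℚ)) * x * y)
    (hv1 : ∀ i : Fin (2 * k), (i : ℕ) ≠ 0 →
      v (Sum.inl i) = (a i : FractionRing (MvPolynomial (Fin 2) ℚ)) * x)
    (hv2 : v (Sum.inr 0) = (m : FractionRing (MvPolynomial (Fin 2) ℚ)) * x ^ k)
    (hv3 : v (Sum.inr 1) = (m : FractionRing (MvPolynomial (Fin 2) ℚ)) * x ^ k * y) :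
    (∃ π : Finpartition (Finset.univ : Finset (Fin (2 * k) ⊕ Fin 2)),
      ∃ d : Finset (Fin (2 * k) ⊕ Fin 2) → Fin (2 * k) ⊕ Fin 2,
        (∀ B ∈ π.parts, d B ∈ B) ∧
        ∑ B ∈ π.parts, v (d B) / ∏ j ∈ B.erase (d B), v j = 2) ↔
    (∃ S : Finset (Fin (2 * k)), S.card = k ∧ ∏ i ∈ S, a i = m) := by
  let i₀ : Fin (2 * k) := ⟨0, by omega⟩
  subst hx hy
  obtain rfl := ProductPartitionReduction.eq_algebraMap_term (i₀ := i₀) (hv0 i₀ rfl)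
    (fun i hi => hv1 i fun h => hi (Fin.ext h)) hv2 hv3
  exact ProductPartitionReduction.exists_finpartition_sum_eq_two_iff (by simp) ha hm
end

section
/- Let k ≥ 1, let a : Fin (2k) → ℕ with a i > 0 for all i, and let m : ℕ satisfy ∏_i a i = m². In the field RatFunc ℚ of rational functions, let ι = Fin (2k) ⊕ Fin 2 and define v : ι → RatFunc ℚ by v (inl i) = (a i) · X, v (inr 0) = m · X^{4k}, and v (inr 1) = m · X^{2k}. Then the following are equivalent: (1) there exist a finite partition π of ι into nonempty blocks, a distinguished element d(B) ∈ B for each block B, and signs ε : blocks of π → ℤ, each ε B equal to 1 or −1 with ε B₀ = 1 for at least one block B₀, such that ∑_{B ∈ π} ε B · (v (d B) / ∏_{j ∈ B, j ≠ d B} v j) = X^{3k} − X^k; (2) there exists S : Finset (Fin (2k)) with S.card = k and ∏_{i ∈ S} a i = m. -/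
/-!
Embedded in Laurent series, every `v j` is a monomial `c j • X ^ e j` with `c j > 0`, so a block
led by `d` contributes the single monomial of degree `e d - ∑ e j ≤ e d`. Comparing coefficients of
`X ^ (3k)`: only the block led by `v (inr 0)` (degree `4k`) reaches degree `3k`, so its divisors have
total degree `k`; they cannot include `v (inr 1)` (degree `2k`), hence are `k` of the `a i X`, and
the coefficient `m / ∏ a i = 1` forces `∏ a i = m`. Conversely, a solution `S` and its complement
give the blocks `m X^{4k} / ∏_{Sᶜ} a i X = X^{3k}` and `m X^{2k} / ∏_S a i X = X^k`.
-/

open Finset HahnSeries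
open scoped LaurentSeries

theorem HahnSeries.prod_single {Γ R α : Type*} [AddCommMonoid Γ] [PartialOrder Γ]
    [IsOrderedCancelAddMonoid Γ] [CommSemiring R] (s : Finset α) (e : α → Γ) (c : α → R) :
    ∏ j ∈ s, single (e j) (c j) = single (∑ j ∈ s, e j) (∏ j ∈ s, c j) := by
  induction s using Finset.cons_induction with
  | empty => simp
  | cons a s ha ih => rw [prod_cons, sum_cons, prod_cons, ih, single_mul_single]

theorem eq_one_of_intCast_mul_eq_one {K : Type*} [Field K] [LinearOrder K] [IsStrictOrderedRing K]
    {ε : ℤ} {x : K} (hε : ε = 1 ∨ ε = -1) (hx : 0 ≤ x) (h : ε * x = 1) : x = 1 := by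
  rcases hε with rfl | rfl
  · simpa using h
  · push_cast at h
    linarith

section Expression

variable {ι K : Type*} [Fintype ι] [DecidableEq ι] [Field K]

/-- `x` is the value of a parenthesis-free expression over `+, -, ÷` using every `v j` exactly once:
a block `B` is a maximal chain of divisions with dividend `d B`, and `ε B` is the sign in front of
it (the leading block has sign `+`). -/
def IsExpressionValue (v : ι → K) (x : K) : Prop :=
  ∃ π : Finpartition (univ : Finset ι), ∃ d : Finset ι → ι, ∃ ε : Finset ι → ℤ,
    (∀ B ∈ π.parts, d B ∈ B) ∧ (∀ B ∈ π.parts, ε B = 1 ∨ ε B = -1) ∧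
    (∃ B₀ ∈ π.parts, ε B₀ = 1) ∧
    ∑ B ∈ π.parts, (ε B : K) * (v (d B) / ∏ j ∈ B.erase (d B), v j) = x

theorem isExpressionValue_sub (v : ι → K) {P Q : Finset ι} {p q : ι} (hp : p ∈ P) (hq : q ∈ Q)
    (hPQ : Disjoint P Q) (hunion : P ∪ Q = univ) :
    IsExpressionValue v (v p / ∏ j ∈ P.erase p, v j - v q / ∏ j ∈ Q.erase q, v j) := by
  have hne : P ≠ Q := fun h => disjoint_left.1 hPQ hp (h ▸ hp)
  let π := (Finpartition.indiscrete (ne_empty_of_mem hp)).extend (ne_empty_of_mem hq) hPQ hunion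
  refine ⟨π, fun B => if B = P then p else q, fun B => if B = P then 1 else -1, ?_, ?_,
    ⟨P, by simp [π], if_pos rfl⟩, ?_⟩
  · simp [π, hp, hq, hne.symm]
  · intro B _
    dsimp only
    split_ifs <;> simp
  · rw [Finpartition.extend_parts, Finpartition.indiscrete_parts,
      sum_insert (by simpa using hne.symm), sum_singleton]
    simp only [if_neg hne.symm]
    push_cast
    ring

end Expression

section LaurentSeries

variable {ι F : Type*} [Field F]

theorem RatFunc.coe_natCast_mul_X_pow (c n : ℕ) :
    (((c : RatFunc F) * RatFunc.X ^ n : RatFunc F) : F⸨X⸩) = single (n : ℤ) (c : F) := by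
  rw [map_mul, map_natCast, map_pow, RatFunc.coe_X, single_pow, ← single_zero_natCast,
    single_mul_single, zero_add, one_pow, mul_one, nsmul_one]

theorem coe_intCast_mul_div_prod {v : ι → RatFunc F} {e : ι → ℕ} {c : ι → F}
    (hv : ∀ j, (v j : F⸨X⸩) = single (e j : ℤ) (c j)) (n : ℤ) (d : ι) (s : Finset ι) :
    ((n * (v d / ∏ j ∈ s, v j) : RatFunc F) : F⸨X⸩) =
      single ((e d : ℤ) - ∑ j ∈ s, (e j : ℤ)) (n * (c d / ∏ j ∈ s, c j)) := by
  rw [map_mul, map_intCast, ← single_zero_intCast, map_div₀, map_prod, hv]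
  simp only [hv, prod_single, single_div_single, single_mul_single, zero_add]

/-- A block has degree at most that of its dividend, so when `j₀` alone has degree `≥ N`, the
coefficient of `X ^ N` comes entirely from the part of `j₀`, which must then be led by `j₀`. -/
theorem part_lead_of_coeff_sum_single [Fintype ι] [DecidableEq ι]
    (π : Finpartition (univ : Finset ι)) {d : Finset ι → ι} (hd : ∀ B ∈ π.parts, d B ∈ B)
    {e : ι → ℕ} {r : Finset ι → F} {j₀ : ι} {N : ℕ} (he : ∀ j ≠ j₀, e j < N)
    (h : (∑ B ∈ π.parts, single ((e (d B) : ℤ) - ∑ j ∈ B.erase (d B), (e j : ℤ)) (r B)).coeff N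
      = 1) :
    d (π.part j₀) = j₀ ∧ N + ∑ j ∈ (π.part j₀).erase j₀, e j = e j₀ ∧ r (π.part j₀) = 1 := by
  have hB₀ : π.part j₀ ∈ π.parts := π.part_mem.2 (mem_univ j₀)
  have lead : ∀ B ∈ π.parts, (e (d B) : ℤ) - ∑ j ∈ B.erase (d B), (e j : ℤ) = N →
      π.part j₀ = B ∧ d B = j₀ := by
    intro B hB hexp
    have hdB : d B = j₀ := by
      by_contra hne
      have := he _ hne
      have : (0 : ℤ) ≤ ∑ j ∈ B.erase (d B), (e j : ℤ) := sum_nonneg fun j _ => by positivity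
      omega
    exact ⟨π.part_eq_of_mem hB (hdB ▸ hd B hB), hdB⟩
  rw [coeff_sum, sum_eq_single_of_mem _ hB₀ fun B hB hne => coeff_single_of_ne fun hexp =>
    hne (lead B hB hexp.symm).1.symm, coeff_single] at h
  split_ifs at h with hexp
  · obtain ⟨-, hlead⟩ := lead _ hB₀ hexp.symm
    rw [hlead] at hexp
    refine ⟨hlead, ?_, h⟩
    rw [← Nat.cast_sum] at hexp
    omega
  · exact absurd h zero_ne_one

end LaurentSeries

namespace ProductPartitionReduction

variable {k : ℕ}

def exponent (k : ℕ) : Fin (2 * k) ⊕ Fin 2 → ℕ :=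
  Sum.elim (fun _ => 1) ![4 * k, 2 * k]

def coefficient (a : Fin (2 * k) → ℕ) (m : ℕ) : Fin (2 * k) ⊕ Fin 2 → ℚ :=
  Sum.elim (fun i => (a i : ℚ)) fun _ => (m : ℚ)

theorem coe_eq_single {a : Fin (2 * k) → ℕ} {m : ℕ} {v : Fin (2 * k) ⊕ Fin 2 → RatFunc ℚ}
    (hv1 : ∀ i, v (Sum.inl i) = (a i : RatFunc ℚ) * RatFunc.X)
    (hv2 : v (Sum.inr 0) = (m : RatFunc ℚ) * RatFunc.X ^ (4 * k))
    (hv3 : v (Sum.inr 1) = (m : RatFunc ℚ) * RatFunc.X ^ (2 * k)) (j : Fin (2 * k) ⊕ Fin 2) :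
    (v j : ℚ⸨X⸩) = single (exponent k j : ℤ) (coefficient a m j) := by
  rcases j with i | j
  · simpa [exponent, coefficient, hv1] using RatFunc.coe_natCast_mul_X_pow (F := ℚ) (a i) 1
  · fin_cases j
    · simpa [exponent, coefficient, hv2] using RatFunc.coe_natCast_mul_X_pow (F := ℚ) m (4 * k)
    · simpa [exponent, coefficient, hv3] using RatFunc.coe_natCast_mul_X_pow (F := ℚ) m (2 * k)

theorem toRight_eq_empty_of_sum_exponent_le (hk : 1 ≤ k) {U : Finset (Fin (2 * k) ⊕ Fin 2)}
    (h : ∑ j ∈ U, exponent k j ≤ k) : U.toRight = ∅ := by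
  rw [sum_sum_eq_sum_toLeft_add_sum_toRight] at h
  refine eq_empty_iff_forall_notMem.2 fun j hj => ?_
  have := single_le_sum (f := fun j => exponent k (Sum.inr j)) (fun _ _ => Nat.zero_le _) hj
  fin_cases j <;> simp [exponent] at this h <;> omega

theorem exists_card_eq_prod_eq (hk : 1 ≤ k) {a : Fin (2 * k) → ℕ} {m : ℕ}
    {v : Fin (2 * k) ⊕ Fin 2 → RatFunc ℚ}
    (hv : ∀ j, (v j : ℚ⸨X⸩) = single (exponent k j : ℤ) (coefficient a m j))
    (h : IsExpressionValue v (RatFunc.X ^ (3 * k) - RatFunc.X ^ k)) :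
    ∃ S : Finset (Fin (2 * k)), #S = k ∧ ∏ i ∈ S, a i = m := by
  obtain ⟨π, d, ε, hd, hε, -, hsum⟩ := h
  have hcoeff := congrArg (fun f : RatFunc ℚ => (f : ℚ⸨X⸩).coeff ((3 * k : ℕ) : ℤ)) hsum
  simp only [map_sum, coe_intCast_mul_div_prod hv] at hcoeff
  have hrhs : ((RatFunc.X ^ (3 * k) - RatFunc.X ^ k : RatFunc ℚ) : ℚ⸨X⸩).coeff
      ((3 * k : ℕ) : ℤ) = 1 := by
    simp [coeff_single]
    omega
  have he : ∀ j ≠ Sum.inr 0, exponent k j < 3 * k := by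
    rintro (i | j) hj
    · simp [exponent]; omega
    · fin_cases j
      · exact absurd rfl hj
      · simp [exponent]; omega
  obtain ⟨hlead, hexp, hr⟩ := part_lead_of_coeff_sum_single π hd he (hcoeff.trans hrhs)
  set U := (π.part (Sum.inr 0)).erase (Sum.inr (0 : Fin 2))
  replace hexp : 3 * k + ∑ j ∈ U, exponent k j = 4 * k := hexp
  have hU : U.toRight = ∅ := toRight_eq_empty_of_sum_exponent_le hk (by omega)
  refine ⟨U.toLeft, ?_, ?_⟩
  · rw [sum_sum_eq_sum_toLeft_add_sum_toRight, hU] at hexp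
    simp [exponent] at hexp
    omega
  · rw [hlead, prod_sum_eq_prod_toLeft_mul_prod_toRight, hU] at hr
    simp only [coefficient, Sum.elim_inl, Sum.elim_inr, prod_empty, mul_one] at hr
    have hquot : (m : ℚ) / ∏ i ∈ U.toLeft, (a i : ℚ) = 1 :=
      eq_one_of_intCast_mul_eq_one (hε _ (π.part_mem.2 (mem_univ _))) (by positivity) hr
    have hne : ∏ i ∈ U.toLeft, (a i : ℚ) ≠ 0 := fun h0 => by simp [h0] at hquot
    rw [div_eq_one_iff_eq hne] at hquot
    exact_mod_cast hquot.symm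

theorem isExpressionValue_of_card_eq_prod_eq {a : Fin (2 * k) → ℕ} (ha : ∀ i, 0 < a i) {m : ℕ}
    (hm : ∏ i, a i = m ^ 2) {v : Fin (2 * k) ⊕ Fin 2 → RatFunc ℚ}
    (hv1 : ∀ i, v (Sum.inl i) = (a i : RatFunc ℚ) * RatFunc.X)
    (hv2 : v (Sum.inr 0) = (m : RatFunc ℚ) * RatFunc.X ^ (4 * k))
    (hv3 : v (Sum.inr 1) = (m : RatFunc ℚ) * RatFunc.X ^ (2 * k))
    {S : Finset (Fin (2 * k))} (hS : #S = k) (hSprod : ∏ i ∈ S, a i = m) :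
    IsExpressionValue v (RatFunc.X ^ (3 * k) - RatFunc.X ^ k) := by
  have hm0 : 0 < m := by
    have := prod_pos fun i (_ : i ∈ univ) => ha i
    rw [hm] at this
    simpa [pos_iff_ne_zero] using this
  have hcompl : ∏ i ∈ Sᶜ, a i = m := by
    have := prod_mul_prod_compl S a
    rw [hm, hSprod, sq] at this
    exact Nat.eq_of_mul_eq_mul_left hm0 this
  have hcard : #Sᶜ = k := by
    rw [card_compl, Fintype.card_fin, hS]
    omega
  have hdivisors : ∀ (j : Fin 2) (T : Finset (Fin (2 * k))), #T = k → ∏ i ∈ T, a i = m →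
      ∏ l ∈ (insert (Sum.inr j) (T.map .inl)).erase (Sum.inr j), v l =
        (m : RatFunc ℚ) * RatFunc.X ^ k := by
    intro j T hT hTprod
    rw [erase_insert (by simp), prod_map]
    simp only [Function.Embedding.inl_apply, hv1, prod_mul_distrib, prod_const, hT,
      ← Nat.cast_prod, hTprod]
  have hunion : insert (Sum.inr 0) (Sᶜ.map .inl) ∪ insert (Sum.inr 1) (S.map .inl) =
      (univ : Finset (Fin (2 * k) ⊕ Fin 2)) := by
    ext (i | j)
    · by_cases i ∈ S <;> simp [*]
    · fin_cases j <;> simp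
  have key := isExpressionValue_sub v (mem_insert_self _ _) (mem_insert_self _ _)
    (by simp [disjoint_left]) hunion
  rw [hdivisors 0 Sᶜ hcard hcompl, hdivisors 1 S hS hSprod, hv2, hv3] at key
  convert key using 1
  have hm0' : (m : RatFunc ℚ) ≠ 0 := by exact_mod_cast hm0.ne'
  have hX : (RatFunc.X : RatFunc ℚ) ≠ 0 := RatFunc.X_ne_zero
  field_simp
  ring

end ProductPartitionReduction

open ProductPartitionReduction in
theorem stmt_8 (k : ℕ) (hk : 1 ≤ k) (a : Fin (2 * k) → ℕ) (ha : ∀ i, 0 < a i)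
    (m : ℕ) (hm : ∏ i, a i = m ^ 2)
    (v : Fin (2 * k) ⊕ Fin 2 → RatFunc ℚ)
    (hv1 : ∀ i, v (Sum.inl i) = (a i : RatFunc ℚ) * RatFunc.X)
    (hv2 : v (Sum.inr 0) = (m : RatFunc ℚ) * RatFunc.X ^ (4 * k))
    (hv3 : v (Sum.inr 1) = (m : RatFunc ℚ) * RatFunc.X ^ (2 * k)) :
    (∃ π : Finpartition (Finset.univ : Finset (Fin (2 * k) ⊕ Fin 2)),
      ∃ d : Finset (Fin (2 * k) ⊕ Fin 2) → Fin (2 * k) ⊕ Fin 2,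
      ∃ ε : Finset (Fin (2 * k) ⊕ Fin 2) → ℤ,
        (∀ B ∈ π.parts, d B ∈ B) ∧
        (∀ B ∈ π.parts, ε B = 1 ∨ ε B = -1) ∧ (∃ B₀ ∈ π.parts, ε B₀ = 1) ∧
        ∑ B ∈ π.parts, (ε B : RatFunc ℚ) * (v (d B) / ∏ j ∈ B.erase (d B), v j)
          = RatFunc.X ^ (3 * k) - RatFunc.X ^ k) ↔
    (∃ S : Finset (Fin (2 * k)), S.card = k ∧ ∏ i ∈ S, a i = m) :=
  ⟨exists_card_eq_prod_eq hk (coe_eq_single hv1 hv2 hv3),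
    fun ⟨_, hS, hSprod⟩ => isExpressionValue_of_card_eq_prod_eq ha hm hv1 hv2 hv3 hS hSprod⟩
end

section
/- Let k ≥ 1, let a : Fin (2k) → ℕ with a i > 0 for all i, and let m : ℕ satisfy ∏_i a i = m². In the field RatFunc ℚ, let ι = Fin (2k) ⊕ Fin 2 and define v : ι → RatFunc ℚ by v (inl i) = (a i) · X, v (inr 0) = m · X^{4k}, and v (inr 1) = m · X^{2k}. Then the following are equivalent: (1) there exist a finite partition π of ι into nonempty blocks, a distinguished element d(B) ∈ B for each block B, and a single distinguished block B₀ ∈ π, such that v (d B₀) / ∏_{j ∈ B₀, j ≠ d B₀} v j − ∑_{B ∈ π, B ≠ B₀} (v (d B) / ∏_{j ∈ B, j ≠ d B} v j) = X^{3k} − X^k; (2) there exists S : Finset (Fin (2k)) with S.card = k and ∏_{i ∈ S} a i = m. -/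
open Finset

theorem stmt_9 (k : ℕ) (hk : 1 ≤ k) (a : Fin (2 * k) → ℕ) (ha : ∀ i, 0 < a i)
    (m : ℕ) (hm : ∏ i, a i = m ^ 2)
    (v : Fin (2 * k) ⊕ Fin 2 → RatFunc ℚ)
    (hv1 : ∀ i, v (Sum.inl i) = (a i : RatFunc ℚ) * RatFunc.X)
    (hv2 : v (Sum.inr 0) = (m : RatFunc ℚ) * RatFunc.X ^ (4 * k))
    (hv3 : v (Sum.inr 1) = (m : RatFunc ℚ) * RatFunc.X ^ (2 * k)) :
    (∃ π : Finpartition (Finset.univ : Finset (Fin (2 * k) ⊕ Fin 2)),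
      ∃ d : Finset (Fin (2 * k) ⊕ Fin 2) → Fin (2 * k) ⊕ Fin 2,
        (∀ B ∈ π.parts, d B ∈ B) ∧
        ∃ B₀ ∈ π.parts,
          v (d B₀) / ∏ j ∈ B₀.erase (d B₀), v j
            - ∑ B ∈ π.parts.erase B₀, v (d B) / ∏ j ∈ B.erase (d B), v j
          = RatFunc.X ^ (3 * k) - RatFunc.X ^ k) ↔
    (∃ S : Finset (Fin (2 * k)), S.card = k ∧ ∏ i ∈ S, a i = m) := by
  classical
  have hm0 : 0 < m := by
    rcases Nat.eq_zero_or_pos m with h | h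
    · exfalso
      have : (0:ℕ) < ∏ i, a i := Finset.prod_pos (fun i _ => ha i)
      rw [hm, h] at this; simp at this
    · exact h
  set nn : Fin (2 * k) ⊕ Fin 2 → ℕ :=
    Sum.elim (fun _ => 1) (fun j => if j = 0 then 4 * k else 2 * k) with hnn
  set cc : Fin (2 * k) ⊕ Fin 2 → ℕ := Sum.elim a (fun _ => m) with hcc
  have hccpos : ∀ j, 0 < cc j := by rintro (i | j) <;> simp [hcc, ha, hm0]
  have hv : ∀ j, v j = (cc j : RatFunc ℚ) * RatFunc.X ^ nn j := by
    rintro (i | j)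
    · simp [hcc, hnn, hv1]
    · fin_cases j
      · simpa [hcc, hnn] using hv2
      · simpa [hcc, hnn] using hv3
  have hprod : ∀ E : Finset (Fin (2 * k) ⊕ Fin 2),
      ∏ j ∈ E, v j = ((∏ j ∈ E, cc j : ℕ) : RatFunc ℚ) * RatFunc.X ^ (∑ j ∈ E, nn j) := by
    intro E
    rw [Nat.cast_prod, ← Finset.prod_pow_eq_pow_sum, ← Finset.prod_mul_distrib]
    exact Finset.prod_congr rfl fun j _ => hv j
  have hXne : (RatFunc.X : RatFunc ℚ) ≠ 0 := RatFunc.X_ne_zero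
  constructor
  · rintro ⟨π, d, hd, B₀, hB₀, heq⟩
    -- abbreviations
    set NB : Finset (Fin (2 * k) ⊕ Fin 2) → ℕ := fun B => ∑ j ∈ B.erase (d B), nn j with hNB
    set CB : Finset (Fin (2 * k) ⊕ Fin 2) → ℕ := fun B => ∏ j ∈ B.erase (d B), cc j with hCB
    have hCBpos : ∀ B, 0 < CB B := fun B => Finset.prod_pos (fun j _ => hccpos j)
    have hCBne : ∀ B, ((CB B : ℕ) : RatFunc ℚ) ≠ 0 := by
      intro B
      rw [← map_natCast (algebraMap (Polynomial ℚ) (RatFunc ℚ))]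
      apply RatFunc.algebraMap_ne_zero
      exact_mod_cast (hCBpos B).ne'
    -- total degree bound
    have htot : ∀ B ∈ π.parts, NB B + nn (d B) ≤ 8 * k := by
      intro B hB
      have h1 : NB B + nn (d B) = ∑ j ∈ B, nn j := Finset.sum_erase_add B nn (hd B hB)
      have h2 : ∑ j ∈ B, nn j ≤ ∑ j : Fin (2 * k) ⊕ Fin 2, nn j :=
        Finset.sum_le_sum_of_subset (Finset.subset_univ B)
      have h3 : ∑ j : Fin (2 * k) ⊕ Fin 2, nn j = 8 * k := by
        rw [hnn, Fintype.sum_sum_type]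
        simp [Fin.sum_univ_two]
        ring
      omega
    -- the key monomial computation
    have key : ∀ B ∈ π.parts,
        RatFunc.X ^ (8 * k) * (v (d B) / ∏ j ∈ B.erase (d B), v j)
        = algebraMap (Polynomial ℚ) (RatFunc ℚ)
            (Polynomial.C ((cc (d B) : ℚ) / (CB B : ℚ)) * Polynomial.X ^ (8 * k + nn (d B) - NB B)) := by
      intro B hB
      have hCne : ((CB B : ℕ) : RatFunc ℚ) ≠ 0 := hCBne B
      have hden : (((CB B : ℕ) : RatFunc ℚ) * RatFunc.X ^ NB B) ≠ 0 :=
        mul_ne_zero hCne (pow_ne_zero _ hXne)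
      have he : 8 * k + nn (d B) - NB B + NB B = 8 * k + nn (d B) := by
        have := htot B hB; omega
      rw [hprod, hv (d B)]
      rw [map_mul, map_pow, RatFunc.algebraMap_X, RatFunc.algebraMap_C, map_div₀,
        map_natCast, map_natCast]
      rw [div_mul_eq_mul_div, ← mul_div_assoc, div_eq_div_iff hden hCne]
      have hX : (RatFunc.X : RatFunc ℚ) ^ (8 * k) * RatFunc.X ^ (nn (d B))
          = RatFunc.X ^ (8 * k + nn (d B) - NB B) * RatFunc.X ^ NB B := by
        rw [← pow_add, ← pow_add, he]
      calc RatFunc.X ^ (8 * k) * ((((cc (d B) : ℕ)) : RatFunc ℚ) * RatFunc.X ^ nn (d B))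
            * (((CB B : ℕ) : RatFunc ℚ))
          = (RatFunc.X ^ (8 * k) * RatFunc.X ^ (nn (d B)))
              * ((((cc (d B) : ℕ)) : RatFunc ℚ) * ((CB B : ℕ) : RatFunc ℚ)) := by ring
        _ = (RatFunc.X ^ (8 * k + nn (d B) - NB B) * RatFunc.X ^ NB B)
              * ((((cc (d B) : ℕ)) : RatFunc ℚ) * ((CB B : ℕ) : RatFunc ℚ)) := by rw [hX]
        _ = (((cc (d B) : ℕ)) : RatFunc ℚ) * RatFunc.X ^ (8 * k + nn (d B) - NB B)
              * (((CB B : ℕ) : RatFunc ℚ) * RatFunc.X ^ NB B) := by ring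
    -- the polynomial identity
    set Q : Finset (Fin (2 * k) ⊕ Fin 2) → Polynomial ℚ := fun B =>
      Polynomial.C ((cc (d B) : ℚ) / (CB B : ℚ)) * Polynomial.X ^ (8 * k + nn (d B) - NB B) with hQ
    have hmain : algebraMap (Polynomial ℚ) (RatFunc ℚ) (Q B₀ - ∑ B ∈ π.parts.erase B₀, Q B)
        = algebraMap (Polynomial ℚ) (RatFunc ℚ)
            ((Polynomial.X : Polynomial ℚ) ^ (11 * k) - Polynomial.X ^ (9 * k)) := by
      rw [map_sub, map_sum, map_sub, map_pow, map_pow, RatFunc.algebraMap_X]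
      rw [hQ]
      rw [← key B₀ hB₀,
        Finset.sum_congr rfl (fun B hB => (key B (Finset.mem_of_mem_erase hB)).symm)]
      rw [← Finset.mul_sum, ← mul_sub, heq, mul_sub, ← pow_add, ← pow_add,
        show 8 * k + 3 * k = 11 * k by ring, show 8 * k + k = 9 * k by ring]
    have hpoly := RatFunc.algebraMap_injective ℚ hmain
    have hco := congrArg (fun p => Polynomial.coeff p (11 * k)) hpoly
    simp only [hQ, Polynomial.coeff_sub, Polynomial.finset_sum_coeff,
      Polynomial.coeff_C_mul_X_pow, Polynomial.coeff_X_pow] at hco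
    simp only [if_true, if_neg (show ¬ 11 * k = 9 * k by omega), sub_zero] at hco
    -- classify blocks whose monomial has exponent 11k
    have key2 : ∀ B ∈ π.parts, 8 * k + nn (d B) - NB B = 11 * k →
        d B = Sum.inr 0 ∧ NB B = k := by
      intro B hB hEB
      have h1 := htot B hB
      have h2 : nn (d B) = 3 * k + NB B := by omega
      rcases hdB : d B with i | j
      · rw [hdB, hnn] at h2
        simp at h2
        omega
      · fin_cases j
        · refine ⟨rfl, ?_⟩
          rw [hdB, hnn] at h2
          simp at h2
          omega
        · rw [hdB, hnn] at h2
          simp at h2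
          omega
    have hqpos : ∀ B, (0:ℚ) ≤ (cc (d B) : ℚ) / (CB B : ℚ) :=
      fun B => div_nonneg (Nat.cast_nonneg _) (Nat.cast_nonneg _)
    have hsum_nonneg : (0:ℚ) ≤ ∑ B ∈ π.parts.erase B₀,
        (if 11 * k = 8 * k + nn (d B) - NB B then (cc (d B) : ℚ) / (CB B : ℚ) else 0) :=
      Finset.sum_nonneg fun B _ => by positivity
    have hB0e : 8 * k + nn (d B₀) - NB B₀ = 11 * k := by
      by_contra h
      rw [if_neg (fun hh => h hh.symm)] at hco
      linarith
    obtain ⟨hdB₀, hNB₀⟩ := key2 B₀ hB₀ hB0e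
    have hzero : ∀ B ∈ π.parts.erase B₀,
        (if 11 * k = 8 * k + nn (d B) - NB B then (cc (d B) : ℚ) / (CB B : ℚ) else 0) = 0 := by
      intro B hB
      apply if_neg
      intro hEB
      obtain ⟨hdB, -⟩ := key2 B (Finset.mem_of_mem_erase hB) hEB.symm
      have h0B : Sum.inr 0 ∈ B := hdB ▸ hd B (Finset.mem_of_mem_erase hB)
      have h0B₀ : Sum.inr 0 ∈ B₀ := hdB₀ ▸ hd B₀ hB₀
      have hBne : B ≠ B₀ := (Finset.mem_erase.1 hB).1
      have hdisj := π.disjoint (Finset.mem_coe.2 (Finset.mem_of_mem_erase hB))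
        (Finset.mem_coe.2 hB₀) hBne
      exact (Finset.disjoint_left.1 hdisj h0B) h0B₀
    rw [Finset.sum_eq_zero hzero, if_pos hB0e.symm, sub_zero] at hco
    -- extract m = CB B₀
    have hCBm : CB B₀ = m := by
      have hcc0 : cc (d B₀) = m := by rw [hdB₀, hcc]; simp
      rw [hcc0] at hco
      have hne : ((CB B₀ : ℕ) : ℚ) ≠ 0 := Nat.cast_ne_zero.2 (hCBpos B₀).ne'
      rw [div_eq_one_iff_eq hne] at hco
      exact_mod_cast hco.symm
    -- all elements of B₀.erase (d B₀) are inl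
    have hnotinr1 : Sum.inr 1 ∉ B₀.erase (d B₀) := by
      intro hmem
      have h1 : nn (Sum.inr 1) ≤ ∑ j ∈ B₀.erase (d B₀), nn j :=
        Finset.single_le_sum (fun j _ => Nat.zero_le _) hmem
      have h2 : nn (Sum.inr 1) = 2 * k := by rw [hnn]; simp
      rw [h2] at h1
      have h3 : NB B₀ = ∑ j ∈ B₀.erase (d B₀), nn j := rfl
      omega
    set S : Finset (Fin (2 * k)) := Finset.univ.filter (fun i => Sum.inl i ∈ B₀.erase (d B₀)) with hS
    have hES : B₀.erase (d B₀) = S.image Sum.inl := by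
      ext x
      rcases x with i | j
      · simp [hS]
      · fin_cases j
        · show (Sum.inr 0 : Fin (2 * k) ⊕ Fin 2) ∈ _ ↔ _
          rw [hdB₀]
          simp
        · show (Sum.inr 1 : Fin (2 * k) ⊕ Fin 2) ∈ _ ↔ _
          simp [hnotinr1]
    have hinj : ∀ x ∈ S, ∀ y ∈ S, (Sum.inl x : Fin (2 * k) ⊕ Fin 2) = Sum.inl y → x = y :=
      fun x _ y _ h => Sum.inl_injective h
    refine ⟨S, ?_, ?_⟩
    · have : NB B₀ = ∑ j ∈ S.image Sum.inl, nn j := by rw [hNB, ← hES]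
      rw [Finset.sum_image hinj] at this
      have h1 : ∀ i ∈ S, nn (Sum.inl i) = 1 := fun i _ => by rw [hnn]; simp
      rw [Finset.sum_congr rfl h1, Finset.sum_const, smul_eq_mul, mul_one] at this
      omega
    · have : CB B₀ = ∏ j ∈ S.image Sum.inl, cc j := by rw [hCB, ← hES]
      rw [Finset.prod_image hinj] at this
      have h1 : ∀ i ∈ S, cc (Sum.inl i) = a i := fun i _ => by rw [hcc]; simp
      rw [Finset.prod_congr rfl h1] at this
      rw [← this, hCBm]
  · rintro ⟨S, hScard, hSprod⟩
    have hmne : ((m : ℕ) : RatFunc ℚ) ≠ 0 := by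
      rw [← map_natCast (algebraMap (Polynomial ℚ) (RatFunc ℚ)) m]
      apply RatFunc.algebraMap_ne_zero
      exact_mod_cast hm0.ne'
    set B₀ : Finset (Fin (2 * k) ⊕ Fin 2) := insert (Sum.inr 0) (S.image Sum.inl) with hB₀
    have h0B : (Sum.inr 0 : Fin (2 * k) ⊕ Fin 2) ∈ B₀ := mem_insert_self _ _
    have h1B : (Sum.inr 1 : Fin (2 * k) ⊕ Fin 2) ∉ B₀ := by simp [hB₀]
    have h1Bc : (Sum.inr 1 : Fin (2 * k) ⊕ Fin 2) ∈ B₀ᶜ := mem_compl.2 h1B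
    have hne : B₀ ≠ B₀ᶜ := by
      intro h
      have h2 := h ▸ h0B
      exact (mem_compl.1 h2) h0B
    -- prod over S.image inl
    have hE0 : B₀.erase (Sum.inr 0) = S.image Sum.inl :=
      Finset.erase_insert (by simp)
    have hprodS : ∏ j ∈ S.image Sum.inl, v j = ((m : ℕ) : RatFunc ℚ) * RatFunc.X ^ k := by
      rw [hprod]
      congr 1
      · rw [Finset.prod_image (by simp [Sum.inl.injEq] : ∀ x ∈ S, ∀ y ∈ S, Sum.inl x = Sum.inl y → x = y)]
        simp [hcc, ← Nat.cast_prod, hSprod]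
      · rw [Finset.sum_image (by simp [Sum.inl.injEq] : ∀ x ∈ S, ∀ y ∈ S, Sum.inl x = Sum.inl y → x = y)]
        simp [hnn, hScard]
    have hE1 : B₀ᶜ.erase (Sum.inr 1) = Sᶜ.image Sum.inl := by
      ext x
      rcases x with i | j
      · simp [hB₀]
      · fin_cases j <;> simp [hB₀]
    have hprodSc : ∏ j ∈ Sᶜ.image Sum.inl, v j = ((m : ℕ) : RatFunc ℚ) * RatFunc.X ^ k := by
      rw [hprod]
      congr 1
      · rw [Finset.prod_image (by simp [Sum.inl.injEq] : ∀ x ∈ Sᶜ, ∀ y ∈ Sᶜ, Sum.inl x = Sum.inl y → x = y)]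
        have h2 : (∏ i ∈ S, a i) * ∏ i ∈ Sᶜ, a i = m * m := by
          rw [Finset.prod_mul_prod_compl, hm, sq]
        rw [hSprod] at h2
        have := Nat.eq_of_mul_eq_mul_left hm0 h2
        simp [hcc, ← Nat.cast_prod, this]
      · rw [Finset.sum_image (by simp [Sum.inl.injEq] : ∀ x ∈ Sᶜ, ∀ y ∈ Sᶜ, Sum.inl x = Sum.inl y → x = y)]
        have : Sᶜ.card = k := by
          rw [Finset.card_compl, hScard, Fintype.card_fin]
          omega
        simp [hnn, this]
    refine ⟨⟨{B₀, B₀ᶜ}, ?_, ?_, ?_⟩, fun B => if B = B₀ then Sum.inr 0 else Sum.inr 1, ?_, B₀, ?_, ?_⟩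
    · rw [Finset.supIndep_pair hne]
      exact disjoint_compl_right
    · simp [Finset.sup_insert, Finset.sup_singleton, sup_compl_eq_top]
    · simp only [Finset.mem_insert, Finset.mem_singleton, not_or]
      constructor
      · intro h; rw [← h] at h0B; simp at h0B
      · intro h; rw [← h] at h1Bc; simp at h1Bc
    · intro B hB
      rcases Finset.mem_insert.1 hB with rfl | hB
      · simp [h0B]
      · rw [Finset.mem_singleton.1 hB]
        simp only [if_neg (Ne.symm hne)]
        exact h1Bc
    · exact mem_insert_self _ _
    · have herase : ({B₀, B₀ᶜ} : Finset _).erase B₀ = {B₀ᶜ} := by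
        ext x
        simp only [Finset.mem_erase, Finset.mem_insert, Finset.mem_singleton]
        constructor
        · rintro ⟨h1, rfl | rfl⟩
          · exact absurd rfl h1
          · rfl
        · rintro rfl
          exact ⟨Ne.symm hne, Or.inr rfl⟩
      rw [herase, Finset.sum_singleton]
      simp only [eq_self_iff_true, if_true, if_neg (Ne.symm hne)]
      have hdiv : ∀ p q : ℕ, (RatFunc.X : RatFunc ℚ) ^ (p + q) / RatFunc.X ^ q = RatFunc.X ^ p := by
        intro p q
        rw [pow_add, mul_div_assoc, div_self (pow_ne_zero _ hXne), mul_one]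
      rw [hE0, hE1, hprodS, hprodSc, hv2, hv3,
        mul_div_mul_left _ _ hmne, mul_div_mul_left _ _ hmne,
        show 4 * k = 3 * k + k by ring, show 2 * k = k + k by ring, hdiv, hdiv]
end

section
/- Let k ≥ 1, let a : Fin (2k) → ℕ with a i > 0 for all i, and let m : ℕ satisfy ∏_i a i = m². In the field RatFunc ℚ, let ι = Fin (2k) ⊕ Fin 2 and define v : ι → RatFunc ℚ by v (inl i) = (a i) · X, v (inr 0) = X^{4k}, and v (inr 1) = X^{2k}. Then the following are equivalent: (1) there exist a finite partition π of ι into nonempty blocks, for each block B a nonempty numerator set N(B) ⊆ B, and signs ε : blocks of π → ℤ, each ε B equal to 1 or −1 with ε B₀ = 1 for at least one block B₀, such that ∑_{B ∈ π} ε B · ((∏_{j ∈ N(B)} v j) / (∏_{j ∈ B \ N(B)} v j)) = m · X^{5k} − m · X^{3k}; (2) there exists S : Finset (Fin (2k)) with S.card = k and ∏_{i ∈ S} a i = m. -/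
/-!
Every value is a monomial `c · X^d`, so each block of a no-parentheses expression evaluates to a
monomial and the expression is a signed sum of monomials; we compare coefficients in the Laurent
series field. Without `X^{4k}` a block has degree at most `4k`, so the coefficient `m` of `X^{5k}`
comes from the block of `X^{4k}` alone; likewise, `-m` at `X^{3k}` comes from the block of
`X^{2k}` alone. Since the degrees of a block's numerator and denominator add up to its total
degree, these two blocks carry their big factor in the numerator and `k` more linear factors
upstairs than downstairs. Being disjoint, they share only `2k` linear factors, so the block of
`X^{4k}` has exactly `k` of them, all in its numerator, and its coefficient `m` is their product.
Conversely, `S ∪ {X^{4k}}` minus `Sᶜ ∪ {X^{2k}}` realizes the target.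
-/

open Finset
open scoped LaurentSeries

namespace RatFunc

variable {K : Type*} [Field K]

theorem coe_C_mul_X_zpow (c : K) (n : ℤ) :
    ((C c * X ^ n : RatFunc K) : K⸨X⸩) = HahnSeries.single n c := by
  have hC : ((C c : RatFunc K) : K⸨X⸩) = HahnSeries.C c := by
    rw [← algebraMap_C, ← IsScalarTower.algebraMap_apply]
    simp
  rw [map_mul, map_zpow₀, coe_X, ← single_zpow, hC, HahnSeries.C_apply,
    HahnSeries.single_mul_single, zero_add, mul_one]

theorem coeff_coe_sum_C_mul_X_zpow {ι : Type*} (s : Finset ι) (c : ι → K) (e : ι → ℤ) (n : ℤ) :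
    ((∑ i ∈ s, C (c i) * X ^ e i : RatFunc K) : K⸨X⸩).coeff n =
      ∑ i ∈ s, if n = e i then c i else 0 := by
  simp only [map_sum, coe_C_mul_X_zpow, HahnSeries.coeff_sum, HahnSeries.coeff_single]
  -- `coeff_single` decides `n = e i` classically
  congr!

theorem prod_C_mul_X_pow {ι : Type*} (s : Finset ι) (c : ι → K) (d : ι → ℕ) :
    ∏ i ∈ s, C (c i) * X ^ d i = C (∏ i ∈ s, c i) * X ^ ∑ i ∈ s, d i := by
  rw [prod_mul_distrib, map_prod, prod_pow_eq_pow_sum]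

theorem C_mul_X_pow_div_C_mul_X_pow (c c' : K) (d d' : ℕ) :
    C c * X ^ d / (C c' * X ^ d') = C (c / c') * X ^ ((d : ℤ) - d') := by
  rw [zpow_sub₀ X_ne_zero, zpow_natCast, zpow_natCast, map_div₀, div_mul_div_comm]

end RatFunc

theorem Finset.eq_and_eq_of_sum_ite_eq {ι β M : Type*} [DecidableEq β] [AddCommMonoid M]
    {s : Finset ι} {i₀ : ι} (h₀ : i₀ ∈ s) {e : ι → β} {q : ι → M} {n : β} {r : M} (hr : r ≠ 0)
    (h : ∑ i ∈ s, (if n = e i then q i else 0) = r) (hne : ∀ i ∈ s, i ≠ i₀ → e i ≠ n) :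
    e i₀ = n ∧ q i₀ = r := by
  rw [sum_eq_single_of_mem i₀ h₀ fun i hi hi₀ => if_neg (hne i hi hi₀).symm] at h
  split_ifs at h with h'
  · exact ⟨h'.symm, h⟩
  · exact absurd h.symm hr

/-- `t` is the value of a no-parentheses `{+, -, ×, ÷}` expression using each `v j` exactly once:
the blocks of `π` are its maximal `×`/`÷` runs, `N B` the factors of `B` that are multiplied, and
`ε B` the sign in front of the run. -/
def IsExprValue {ι F : Type*} [Fintype ι] [DecidableEq ι] [Field F] (v : ι → F) (t : F) : Prop :=
  ∃ π : Finpartition (univ : Finset ι), ∃ N : Finset ι → Finset ι, ∃ ε : Finset ι → ℤ,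
    (∀ B ∈ π.parts, (N B).Nonempty ∧ N B ⊆ B) ∧
    (∀ B ∈ π.parts, ε B = 1 ∨ ε B = -1) ∧ (∃ B₀ ∈ π.parts, ε B₀ = 1) ∧
    ∑ B ∈ π.parts, (ε B : F) * ((∏ j ∈ N B, v j) / ∏ j ∈ B \ N B, v j) = t

namespace ProductPartition

open RatFunc

variable {k : ℕ}

def coef (a : Fin (2 * k) → ℕ) : Fin (2 * k) ⊕ Fin 2 → ℕ := Sum.elim a 1

def deg (k : ℕ) : Fin (2 * k) ⊕ Fin 2 → ℕ := Sum.elim 1 ![4 * k, 2 * k]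

noncomputable def value (a : Fin (2 * k) → ℕ) (j : Fin (2 * k) ⊕ Fin 2) : RatFunc ℚ :=
  C (coef a j : ℚ) * X ^ deg k j

def blockDeg (k : ℕ) (N B : Finset (Fin (2 * k) ⊕ Fin 2)) : ℤ :=
  (∑ j ∈ N, deg k j : ℕ) - (∑ j ∈ B \ N, deg k j : ℕ)

noncomputable def blockCoef (a : Fin (2 * k) → ℕ) (N B : Finset (Fin (2 * k) ⊕ Fin 2)) : ℚ :=
  (∏ j ∈ N, coef a j : ℕ) / (∏ j ∈ B \ N, coef a j : ℕ)

theorem prod_coef (a : Fin (2 * k) → ℕ) (T : Finset (Fin (2 * k) ⊕ Fin 2)) :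
    ∏ j ∈ T, coef a j = ∏ i ∈ T.toLeft, a i := by
  simp [prod_sum_eq_prod_toLeft_mul_prod_toRight, coef]

theorem card_toLeft_le (T : Finset (Fin (2 * k) ⊕ Fin 2)) : #T.toLeft ≤ 2 * k :=
  (card_le_univ _).trans_eq (Fintype.card_fin _)

theorem sum_deg (T : Finset (Fin (2 * k) ⊕ Fin 2)) :
    ∑ j ∈ T, deg k j = #T.toLeft + (if .inr 0 ∈ T then 4 * k else 0) +
      (if .inr 1 ∈ T then 2 * k else 0) := by
  rw [sum_sum_eq_sum_toLeft_add_sum_toRight, ← univ_inter T.toRight, ← sum_ite_mem,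
    Fin.sum_univ_two]
  simp [deg, add_assoc]

theorem prod_value (a : Fin (2 * k) → ℕ) (T : Finset (Fin (2 * k) ⊕ Fin 2)) :
    ∏ j ∈ T, value a j = C ((∏ j ∈ T, coef a j : ℕ) : ℚ) * X ^ ∑ j ∈ T, deg k j := by
  rw [Nat.cast_prod, ← prod_C_mul_X_pow]
  rfl

theorem blockDeg_le {N B : Finset (Fin (2 * k) ⊕ Fin 2)} (hNB : N ⊆ B) :
    blockDeg k N B ≤ 2 * k + (if .inr 0 ∈ B then 4 * k else 0) +
      (if .inr 1 ∈ B then 2 * k else 0) := by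
  have hsub := sum_le_sum_of_subset (f := deg k) hNB
  have hB := sum_deg B
  have hcard := card_toLeft_le B
  unfold blockDeg
  omega

theorem two_mul_sum_deg {N B : Finset (Fin (2 * k) ⊕ Fin 2)} (hNB : N ⊆ B) :
    2 * ((∑ j ∈ N, deg k j : ℕ) : ℤ) = (∑ j ∈ B, deg k j : ℕ) + blockDeg k N B := by
  rw [blockDeg, ← sum_sdiff hNB]
  push_cast
  ring

theorem intCast_mul_div_prod_value (a : Fin (2 * k) → ℕ) (N B : Finset (Fin (2 * k) ⊕ Fin 2))
    (ε : ℤ) : (ε : RatFunc ℚ) * ((∏ j ∈ N, value a j) / ∏ j ∈ B \ N, value a j) =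
      C (ε * blockCoef a N B) * X ^ blockDeg k N B := by
  rw [prod_value, prod_value, C_mul_X_pow_div_C_mul_X_pow, ← mul_assoc, map_mul, map_intCast]
  rfl

theorem sum_ite_blockDeg_eq {a : Fin (2 * k) → ℕ} {m : ℕ}
    {s : Finset (Finset (Fin (2 * k) ⊕ Fin 2))}
    {N : Finset (Fin (2 * k) ⊕ Fin 2) → Finset (Fin (2 * k) ⊕ Fin 2)}
    {ε : Finset (Fin (2 * k) ⊕ Fin 2) → ℤ}
    (h : ∑ B ∈ s, (ε B : RatFunc ℚ) * ((∏ j ∈ N B, value a j) / ∏ j ∈ B \ N B, value a j) =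
      (m : RatFunc ℚ) * X ^ (5 * k) - (m : RatFunc ℚ) * X ^ (3 * k)) (n : ℤ) :
    ∑ B ∈ s, (if n = blockDeg k (N B) B then ε B * blockCoef a (N B) B else 0) =
      (if n = 5 * k then (m : ℚ) else 0) - (if n = 3 * k then (m : ℚ) else 0) := by
  have hmono : ∀ d : ℕ, (m : RatFunc ℚ) * X ^ d = C (m : ℚ) * X ^ (d : ℤ) := fun d => by simp
  have := congrArg (fun f : RatFunc ℚ => (f : ℚ⸨X⸩).coeff n) h
  simp only [intCast_mul_div_prod_value, coeff_coe_sum_C_mul_X_zpow, hmono, map_sub,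
    coe_C_mul_X_zpow, HahnSeries.coeff_sub, HahnSeries.coeff_single] at this
  simpa using this

theorem card_toLeft_eq_of_blockDeg {N₀ B₀ N₁ B₁ : Finset (Fin (2 * k) ⊕ Fin 2)} (h₀ : N₀ ⊆ B₀)
    (h₁ : N₁ ⊆ B₁) (hB : Disjoint B₀ B₁) (hr₀ : .inr 0 ∈ B₀) (hr₁ : .inr 1 ∈ B₁)
    (hd₀ : blockDeg k N₀ B₀ = 5 * k) (hd₁ : blockDeg k N₁ B₁ = 3 * k) :
    #N₀.toLeft = k ∧ #(B₀ \ N₀).toLeft = 0 := by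
  have hr₀' : .inr 0 ∉ B₁ := disjoint_left.1 hB hr₀
  have hr₁' : .inr 1 ∉ B₀ := disjoint_right.1 hB hr₁
  have hr₀'' : .inr 0 ∉ N₁ := fun h => hr₀' (h₁ h)
  have hr₁'' : .inr 1 ∉ N₀ := fun h => hr₁' (h₀ h)
  have e₀ := two_mul_sum_deg h₀
  have e₁ := two_mul_sum_deg h₁
  have l₀ := card_le_card (toLeft_subset_toLeft h₀)
  have l₁ := card_le_card (toLeft_subset_toLeft h₁)
  have hsd : #(B₀ \ N₀).toLeft = #B₀.toLeft - #N₀.toLeft := by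
    rw [toLeft_sdiff, card_sdiff_of_subset (toLeft_subset_toLeft h₀)]
  have hl : #B₀.toLeft + #B₁.toLeft ≤ 2 * k := by
    rw [← card_union_of_disjoint (disjoint_left.2 fun i hi hi' =>
      disjoint_left.1 hB (mem_toLeft.1 hi) (mem_toLeft.1 hi')), ← toLeft_union]
    exact card_toLeft_le _
  rw [hd₀, sum_deg, sum_deg] at e₀
  rw [hd₁, sum_deg, sum_deg] at e₁
  simp only [hr₀, hr₁, hr₀', hr₁', hr₀'', hr₁'', if_true, if_false] at e₀ e₁
  split_ifs at e₀ e₁ <;> omega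

theorem exists_card_eq_prod_eq_of_isExprValue (hk : 1 ≤ k) {a : Fin (2 * k) → ℕ}
    (ha : ∀ i, 0 < a i) {m : ℕ} (hm : 0 < m)
    (h : IsExprValue (value a) ((m : RatFunc ℚ) * X ^ (5 * k) - (m : RatFunc ℚ) * X ^ (3 * k))) :
    ∃ S : Finset (Fin (2 * k)), #S = k ∧ ∏ i ∈ S, a i = m := by
  obtain ⟨π, N, ε, hNB, hε, -, hsum⟩ := h
  have hN (B) (hB : B ∈ π.parts) : N B ⊆ B := (hNB B hB).2
  set B₀ := π.part (.inr 0)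
  set B₁ := π.part (.inr 1)
  have hB₀ : B₀ ∈ π.parts := π.part_mem.2 (mem_univ _)
  have hB₁ : B₁ ∈ π.parts := π.part_mem.2 (mem_univ _)
  have hm' : (m : ℚ) ≠ 0 := by positivity
  have hk' : k ≠ 0 := by omega
  obtain ⟨hd₀, hq₀⟩ := eq_and_eq_of_sum_ite_eq hB₀ hm'
    (by simpa [hk'] using sum_ite_blockDeg_eq hsum (5 * k)) fun B hB hBB₀ => by
      have h0 : .inr 0 ∉ B := fun h => hBB₀ (π.part_eq_of_mem hB h).symm
      have := blockDeg_le (hN B hB)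
      split_ifs at this <;> omega
  obtain ⟨hd₁, -⟩ := eq_and_eq_of_sum_ite_eq hB₁ (neg_ne_zero.2 hm')
    (by simpa [hk'] using sum_ite_blockDeg_eq hsum (3 * k)) fun B hB hBB₁ => by
      have h1 : .inr 1 ∉ B := fun h => hBB₁ (π.part_eq_of_mem hB h).symm
      by_cases h0 : .inr 0 ∈ B
      · rw [← π.part_eq_of_mem hB h0, hd₀]; omega
      have := blockDeg_le (hN B hB)
      rw [if_neg h0, if_neg h1] at this
      omega
  have hne : B₀ ≠ B₁ := fun h => by rw [h, hd₁] at hd₀; omega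
  obtain ⟨hcard, hden⟩ := card_toLeft_eq_of_blockDeg (hN _ hB₀) (hN _ hB₁)
    (π.disjoint hB₀ hB₁ hne) (π.mem_part (mem_univ _)) (π.mem_part (mem_univ _)) hd₀ hd₁
  rw [blockCoef, prod_coef, prod_coef, card_eq_zero.1 hden, prod_empty, Nat.cast_one,
    div_one] at hq₀
  have hε₀ : ε B₀ = 1 := (hε _ hB₀).resolve_right fun h => by
    rw [h, Int.cast_neg, Int.cast_one, neg_one_mul] at hq₀
    have : (0 : ℚ) < ∏ i ∈ (N B₀).toLeft, a i := by exact_mod_cast prod_pos fun i _ => ha i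
    have : (0 : ℚ) < m := by exact_mod_cast hm
    linarith
  rw [hε₀, Int.cast_one, one_mul] at hq₀
  exact ⟨_, hcard, by exact_mod_cast hq₀⟩

theorem isExprValue_of_card_eq_prod_eq {a : Fin (2 * k) → ℕ} {m : ℕ} (hm : ∏ i, a i = m ^ 2)
    (hm0 : 0 < m) {S : Finset (Fin (2 * k))} (hS : #S = k) (hSm : ∏ i ∈ S, a i = m) :
    IsExprValue (value a) ((m : RatFunc ℚ) * X ^ (5 * k) - (m : RatFunc ℚ) * X ^ (3 * k)) := by
  have hSc : ∏ i ∈ Sᶜ, a i = m := by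
    have := prod_mul_prod_compl S a
    rw [hSm, hm, sq] at this
    exact Nat.eq_of_mul_eq_mul_left hm0 this
  have hSc' : #Sᶜ = k := by rw [card_compl, Fintype.card_fin, hS]; omega
  set B₀ : Finset (Fin (2 * k) ⊕ Fin 2) := S.disjSum {0}
  set B₁ : Finset (Fin (2 * k) ⊕ Fin 2) := Sᶜ.disjSum {1}
  have hdisj : Disjoint B₀ B₁ := by
    rw [disjoint_left]
    rintro (i | r) <;> simp [B₀, B₁]
    omega
  have hunion : B₀ ⊔ B₁ = univ := by
    ext (i | r) <;> simp [B₀, B₁]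
    · tauto
    · omega
  have hne : B₁ ≠ B₀ := by simp [B₀, B₁]
  set π := (Finpartition.indiscrete (a := B₀) (by simp [B₀])).extend (by simp [B₁]) hdisj hunion
  refine ⟨π, id, fun B => if B = B₀ then 1 else -1,
    fun B hB => ⟨π.nonempty_of_mem_parts hB, subset_rfl⟩,
    fun B _ => by by_cases B = B₀ <;> simp [*], ⟨B₀, by simp [π], if_pos rfl⟩, ?_⟩
  simp only [π, Finpartition.extend_parts, Finpartition.indiscrete_parts, sum_pair hne, id,
    sdiff_self, bot_eq_empty, prod_empty, div_one, prod_value, prod_coef]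
  simp [B₀, B₁, hne, hSm, hSc, hS, hSc', deg]
  ring_nf

end ProductPartition

theorem stmt_10 (k : ℕ) (hk : 1 ≤ k) (a : Fin (2 * k) → ℕ) (ha : ∀ i, 0 < a i)
    (m : ℕ) (hm : ∏ i, a i = m ^ 2)
    (v : Fin (2 * k) ⊕ Fin 2 → RatFunc ℚ)
    (hv1 : ∀ i, v (Sum.inl i) = (a i : RatFunc ℚ) * RatFunc.X)
    (hv2 : v (Sum.inr 0) = RatFunc.X ^ (4 * k))
    (hv3 : v (Sum.inr 1) = RatFunc.X ^ (2 * k)) :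
    (∃ π : Finpartition (Finset.univ : Finset (Fin (2 * k) ⊕ Fin 2)),
      ∃ N : Finset (Fin (2 * k) ⊕ Fin 2) → Finset (Fin (2 * k) ⊕ Fin 2),
      ∃ ε : Finset (Fin (2 * k) ⊕ Fin 2) → ℤ,
        (∀ B ∈ π.parts, (N B).Nonempty ∧ N B ⊆ B) ∧
        (∀ B ∈ π.parts, ε B = 1 ∨ ε B = -1) ∧ (∃ B₀ ∈ π.parts, ε B₀ = 1) ∧
        ∑ B ∈ π.parts,
            (ε B : RatFunc ℚ) * ((∏ j ∈ N B, v j) / ∏ j ∈ B \ N B, v j)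
          = (m : RatFunc ℚ) * RatFunc.X ^ (5 * k)
            - (m : RatFunc ℚ) * RatFunc.X ^ (3 * k)) ↔
    (∃ S : Finset (Fin (2 * k)), S.card = k ∧ ∏ i ∈ S, a i = m) := by
  have hm0 : 0 < m := (pow_pos_iff two_ne_zero).1 (hm ▸ prod_pos fun i _ => ha i)
  obtain rfl : v = ProductPartition.value a := by
    funext j
    rcases j with i | r
    · simp [hv1, ProductPartition.value, ProductPartition.coef, ProductPartition.deg]
    · fin_cases r <;>
        simp [hv2, hv3, ProductPartition.value, ProductPartition.coef, ProductPartition.deg]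
  exact ⟨ProductPartition.exists_card_eq_prod_eq_of_isExprValue hk ha hm0,
    fun ⟨S, hS, hSm⟩ => ProductPartition.isExprValue_of_card_eq_prod_eq hm hm0 hS hSm⟩
end

section
/- Let k ≥ 1, let a : Fin (2k) → ℕ with a i > 0 for all i, and let m : ℕ satisfy ∏_i a i = m². In the field RatFunc ℚ, let ι = Fin (2k) ⊕ Fin 2 and define v : ι → RatFunc ℚ by v (inl i) = (a i) · X, v (inr 0) = X^{4k}, and v (inr 1) = X^{2k}. Suppose π is a finite partition of ι into nonempty blocks, N assigns to each block B a nonempty subset N(B) ⊆ B, and ε assigns to each block a sign in {1, −1} with at least one block signed +1, such that ∑_{B ∈ π} ε B · ((∏_{j ∈ N(B)} v j)/(∏_{j ∈ B \ N(B)} v j)) = m · X^{5k} − m · X^{3k}. Then N(B) = B for every block B of π (i.e., no division occurs in the expression). -/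
open Finset Polynomial

theorem stmt_13 (k : ℕ) (hk : 1 ≤ k) (a : Fin (2 * k) → ℕ) (ha : ∀ i, 0 < a i)
    (m : ℕ) (hm : ∏ i, a i = m ^ 2)
    (v : Fin (2 * k) ⊕ Fin 2 → RatFunc ℚ)
    (hv1 : ∀ i, v (Sum.inl i) = (a i : RatFunc ℚ) * RatFunc.X)
    (hv2 : v (Sum.inr 0) = RatFunc.X ^ (4 * k))
    (hv3 : v (Sum.inr 1) = RatFunc.X ^ (2 * k))
    (π : Finpartition (Finset.univ : Finset (Fin (2 * k) ⊕ Fin 2)))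
    (N : Finset (Fin (2 * k) ⊕ Fin 2) → Finset (Fin (2 * k) ⊕ Fin 2))
    (hN : ∀ B ∈ π.parts, (N B).Nonempty ∧ N B ⊆ B)
    (ε : Finset (Fin (2 * k) ⊕ Fin 2) → ℤ)
    (hε : ∀ B ∈ π.parts, ε B = 1 ∨ ε B = -1)
    (hε1 : ∃ B₀ ∈ π.parts, ε B₀ = 1)
    (h : ∑ B ∈ π.parts,
        (ε B : RatFunc ℚ) * ((∏ j ∈ N B, v j) / ∏ j ∈ B \ N B, v j)
      = (m : RatFunc ℚ) * RatFunc.X ^ (5 * k)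
        - (m : RatFunc ℚ) * RatFunc.X ^ (3 * k)) :
    ∀ B ∈ π.parts, N B = B := by
  classical
  set d : Fin (2 * k) ⊕ Fin 2 → ℕ :=
    Sum.elim (fun _ => 1) (fun i => if i = 0 then 4 * k else 2 * k) with hd
  set c : Fin (2 * k) ⊕ Fin 2 → ℚ := Sum.elim (fun i => (a i : ℚ)) (fun _ => 1) with hc
  have hd1 : ∀ j, 1 ≤ d j := by
    rintro (i | i)
    · simp [hd]
    · simp only [hd, Sum.elim_inr]
      split <;> omega
  have hcpos : ∀ j, 0 < c j := by
    rintro (i | i)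
    · simpa [hc] using ha i
    · simp [hc]
  have hvj : ∀ j, v j = algebraMap ℚ[X] (RatFunc ℚ) (C (c j) * X ^ (d j)) := by
    rintro (i | i)
    · rw [hv1]
      simp [hd, hc, map_mul, RatFunc.algebraMap_X]
    · fin_cases i
    
      · rw [show (Sum.inr (⟨0, by omega⟩ : Fin 2) : Fin (2*k) ⊕ Fin 2) = Sum.inr 0 from rfl, hv2]
        simp [hd, hc, RatFunc.algebraMap_X, map_pow]
      · rw [show (Sum.inr (⟨1, by omega⟩ : Fin 2) : Fin (2*k) ⊕ Fin 2) = Sum.inr 1 from rfl, hv3]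
        simp [hd, hc, RatFunc.algebraMap_X, map_pow]
  have hprod : ∀ S : Finset (Fin (2 * k) ⊕ Fin 2),
      ∏ j ∈ S, v j
        = algebraMap ℚ[X] (RatFunc ℚ) (C (∏ j ∈ S, c j) * X ^ (∑ j ∈ S, d j)) := by
    intro S
    simp only [hvj]
    rw [← map_prod]
    congr 1
    rw [Finset.prod_mul_distrib, Finset.prod_pow_eq_pow_sum, map_prod]
  obtain ⟨P, hP⟩ : ∃ P : Finset (Fin (2 * k) ⊕ Fin 2) → ℚ,
      P = fun B => ∏ j ∈ N B, c j := ⟨_, rfl⟩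
  obtain ⟨Q, hQ⟩ : ∃ Q : Finset (Fin (2 * k) ⊕ Fin 2) → ℚ,
      Q = fun B => ∏ j ∈ B \ N B, c j := ⟨_, rfl⟩
  obtain ⟨s, hs⟩ : ∃ s : Finset (Fin (2 * k) ⊕ Fin 2) → ℕ,
      s = fun B => ∑ j ∈ N B, d j := ⟨_, rfl⟩
  obtain ⟨t, ht⟩ : ∃ t : Finset (Fin (2 * k) ⊕ Fin 2) → ℕ,
      t = fun B => ∑ j ∈ B \ N B, d j := ⟨_, rfl⟩
  obtain ⟨M, hM⟩ : ∃ M : ℕ, M = ∑ B ∈ π.parts, t B := ⟨_, rfl⟩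
  obtain ⟨e, he⟩ : ∃ e : Finset (Fin (2 * k) ⊕ Fin 2) → ℕ,
      e = fun B => s B + (M - t B) := ⟨_, rfl⟩
  have htM : ∀ B ∈ π.parts, t B ≤ M := by
    intro B hB
    rw [hM]
    exact Finset.single_le_sum (fun _ _ => Nat.zero_le _) hB
  have hQpos : ∀ B, 0 < Q B := by
    intro B
    rw [hQ]
    exact Finset.prod_pos fun j _ => hcpos j
  -- per-term identity
  have hterm : ∀ B ∈ π.parts,
      (ε B : RatFunc ℚ) * ((∏ j ∈ N B, v j) / ∏ j ∈ B \ N B, v j) * RatFunc.X ^ M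
        = algebraMap ℚ[X] (RatFunc ℚ) (C ((ε B : ℚ) * (P B / Q B)) * X ^ e B) := by
    intro B hB
    have hp1 : ∏ j ∈ N B, v j = algebraMap ℚ[X] (RatFunc ℚ) (C (P B) * X ^ s B) := by
      simp only [hP, hs]; exact hprod (N B)
    have hp2 : ∏ j ∈ B \ N B, v j = algebraMap ℚ[X] (RatFunc ℚ) (C (Q B) * X ^ t B) := by
      simp only [hQ, ht]; exact hprod (B \ N B)
    rw [hp1, hp2]
    have hden : algebraMap ℚ[X] (RatFunc ℚ) (C (Q B) * X ^ t B) ≠ 0 := by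
      rw [map_ne_zero_iff _ (RatFunc.algebraMap_injective ℚ)]
      exact mul_ne_zero (by simpa using (hQpos B).ne') (pow_ne_zero _ X_ne_zero)
    rw [mul_div_assoc', div_mul_eq_mul_div, div_eq_iff hden]
    have hε' : (ε B : RatFunc ℚ) = algebraMap ℚ[X] (RatFunc ℚ) (C (ε B : ℚ)) := by
      rw [Polynomial.C_eq_intCast, map_intCast]
    have hXX : (RatFunc.X : RatFunc ℚ) = algebraMap ℚ[X] (RatFunc ℚ) X :=
      RatFunc.algebraMap_X.symm
    rw [hε', hXX]
    simp only [← map_pow, ← map_mul]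
    congr 1
    obtain ⟨u, hu⟩ : ∃ u, M = t B + u := ⟨M - t B, by have := htM B hB; omega⟩
    have heB : e B = s B + u := by simp only [he]; omega
    generalize hr : P B / Q B = r
    have hPr : P B = r * Q B := by rw [← hr]; exact (div_mul_cancel₀ _ (hQpos B).ne').symm
    rw [heB, hu, hPr]
    simp only [map_mul]
    ring
  -- the polynomial identity
  have hpoly : (∑ B ∈ π.parts, C ((ε B : ℚ) * (P B / Q B)) * X ^ e B)
      = C (m : ℚ) * X ^ (5 * k + M) - C (m : ℚ) * X ^ (3 * k + M) := by
    apply RatFunc.algebraMap_injective ℚ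
    rw [map_sum, ← Finset.sum_congr rfl hterm, ← Finset.sum_mul, h]
    rw [show (RatFunc.X : RatFunc ℚ) = algebraMap ℚ[X] (RatFunc ℚ) X from
      RatFunc.algebraMap_X.symm]
    rw [show ((m : ℕ) : RatFunc ℚ) = algebraMap ℚ[X] (RatFunc ℚ) (C (m : ℚ)) by
      simp]
    rw [← map_pow, ← map_pow, ← map_mul, ← map_mul, ← map_sub, ← map_pow, ← map_mul]
    congr 1
    ring
  have hm0 : (m : ℚ) ≠ 0 := by
    have : 0 < ∏ i, a i := Finset.prod_pos fun i _ => ha i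
    rw [hm] at this
    have hm' : m ≠ 0 := by intro h0; rw [h0] at this; simp at this
    exact_mod_cast hm'
  -- coefficient extraction
  have hcoeff : ∀ n : ℕ,
      (∑ B ∈ π.parts, if n = e B then (ε B : ℚ) * (P B / Q B) else 0)
        = (C (m : ℚ) * X ^ (5 * k + M) - C (m : ℚ) * X ^ (3 * k + M)).coeff n := by
    intro n
    rw [← hpoly, Polynomial.finset_sum_coeff]
    refine Finset.sum_congr rfl fun B _ => ?_
    rw [Polynomial.coeff_C_mul, Polynomial.coeff_X_pow, mul_ite, mul_one, mul_zero]
  have hex : ∀ n : ℕ, (C (m : ℚ) * X ^ (5 * k + M) - C (m : ℚ) * X ^ (3 * k + M)).coeff n ≠ 0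
      → ∃ B ∈ π.parts, e B = n := by
    intro n hn
    by_contra hcon
    push_neg at hcon
    rw [← hcoeff n] at hn
    exact hn (Finset.sum_eq_zero fun B hB => if_neg fun hEq => hcon B hB hEq.symm)
  have hB1 : ∃ B ∈ π.parts, e B = 5 * k + M := by
    apply hex
    rw [Polynomial.coeff_sub, Polynomial.coeff_C_mul, Polynomial.coeff_C_mul,
      Polynomial.coeff_X_pow, Polynomial.coeff_X_pow, if_pos rfl,
      if_neg (by omega : ¬ 5 * k + M = 3 * k + M)]
    simpa using hm0
  have hB2 : ∃ B ∈ π.parts, e B = 3 * k + M := by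
    apply hex
    rw [Polynomial.coeff_sub, Polynomial.coeff_C_mul, Polynomial.coeff_C_mul,
      Polynomial.coeff_X_pow, Polynomial.coeff_X_pow, if_pos rfl,
      if_neg (by omega : ¬ 3 * k + M = 5 * k + M)]
    simpa using hm0
  obtain ⟨B1, hB1p, hB1e⟩ := hB1
  obtain ⟨B2, hB2p, hB2e⟩ := hB2
  have hne : B1 ≠ B2 := by
    intro hEq
    rw [hEq, hB2e] at hB1e
    omega
  -- degree bookkeeping
  have hst : ∀ B ∈ π.parts, s B + t B = ∑ j ∈ B, d j := by
    intro B hB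
    rw [add_comm, hs, ht]
    exact Finset.sum_sdiff (hN B hB).2
  have hDsum : ∑ B ∈ π.parts, ∑ j ∈ B, d j = 8 * k := by
    have hbu : π.parts.biUnion id = (Finset.univ : Finset (Fin (2*k) ⊕ Fin 2)) :=
      π.biUnion_parts
    have := Finset.sum_biUnion (f := d) π.supIndep.pairwiseDisjoint
    rw [hbu] at this
    rw [show (∑ B ∈ π.parts, ∑ j ∈ B, d j) = ∑ B ∈ π.parts, ∑ j ∈ id B, d j from rfl,
      ← this, Fintype.sum_sum_type]
    simp only [hd, Sum.elim_inl, Sum.elim_inr, Finset.sum_const, Finset.card_univ,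
      Fintype.card_fin, smul_eq_mul, Fin.sum_univ_two]
    norm_num
    omega
  have hpairsub : ({B1, B2} : Finset _) ⊆ π.parts := by
    intro B hB
    rcases Finset.mem_insert.mp hB with rfl | hB
    · exact hB1p
    · rw [Finset.mem_singleton.mp hB]; exact hB2p
  have htotal : ∑ B ∈ π.parts \ {B1, B2}, ∑ j ∈ B, d j
      + ∑ B ∈ ({B1, B2} : Finset _), ∑ j ∈ B, d j = 8 * k := by
    rw [Finset.sum_sdiff hpairsub, hDsum]
  have hs1 : s B1 = 5 * k + t B1 := by
    have h1 := htM B1 hB1p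
    simp only [he] at hB1e
    omega
  have hs2 : s B2 = 3 * k + t B2 := by
    have h2 := htM B2 hB2p
    simp only [he] at hB2e
    omega
  have hD1 : ∑ j ∈ B1, d j = 5 * k + 2 * t B1 := by rw [← hst B1 hB1p]; omega
  have hD2 : ∑ j ∈ B2, d j = 3 * k + 2 * t B2 := by rw [← hst B2 hB2p]; omega
  have hpairval : ∑ B ∈ ({B1, B2} : Finset _), ∑ j ∈ B, d j
      = (5 * k + 2 * t B1) + (3 * k + 2 * t B2) := by
    simp only [Finset.sum_pair hne]
    rw [hD1, hD2]
  have hrest0 : ∑ B ∈ π.parts \ {B1, B2}, ∑ j ∈ B, d j = 0 ∧ t B1 = 0 ∧ t B2 = 0 := by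
    omega
  have hnorest : ∀ B ∈ π.parts, B = B1 ∨ B = B2 := by
    intro B hB
    by_contra hcon
    push_neg at hcon
    have hBmem : B ∈ π.parts \ {B1, B2} := by
      simp [Finset.mem_sdiff, hB, hcon.1, hcon.2]
    have hle : 1 ≤ ∑ j ∈ B, d j := by
      obtain ⟨j, hj⟩ := π.nonempty_of_mem_parts hB
      calc 1 ≤ d j := hd1 j
        _ ≤ ∑ j ∈ B, d j := Finset.single_le_sum (fun _ _ => Nat.zero_le _) hj
    have hBle : ∑ j ∈ B, d j ≤ ∑ B ∈ π.parts \ {B1, B2}, ∑ j ∈ B, d j :=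
      Finset.single_le_sum (f := fun B => ∑ j ∈ B, d j) (fun _ _ => Nat.zero_le _) hBmem
    omega
  intro B hB
  have ht0 : t B = 0 := by
    rcases hnorest B hB with rfl | rfl
    · exact hrest0.2.1
    · exact hrest0.2.2
  have hempty : B \ N B = ∅ := by
    by_contra hne'
    obtain ⟨j, hj⟩ := Finset.nonempty_of_ne_empty hne'
    have h1 := hd1 j
    have h2 : d j ≤ t B := by
      rw [ht]
      exact Finset.single_le_sum (fun _ _ => Nat.zero_le _) hj
    omega
  exact Finset.Subset.antisymm (hN B hB).2 (Finset.sdiff_eq_empty_iff_subset.mp hempty)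
end
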